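/- arXiv:2601.13161 — 6 statements merged into one kernel-verified Lean document; each statement's English description precedes it below -/
import Mathlib

section
/- Let X be a compact metric space, U = {U_1, ..., U_r} a finite open cover of X, and k ∈ ℕ. Then there exist k finite families C_0, ..., C_{k-1}, each consisting of pairwise disjoint closed subsets of X, such that: (1) every member of each C_j is contained in some member of U, and (2) for every x ∈ X, the total number of sets among all the C_j containing x is at least k − ord(U, x), where ord(U,x) = −1 + Σ_{i=1}^r 1_{U_i}(x). -/
open scoped Classical

/-- Ostrand–Kolmogorov covers: given a finite open cover U = {U_1,…,U_r} of a compact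
metric space X and k ∈ ℕ, there are k finite families of pairwise disjoint closed sets,
each refining U, such that every x ∈ X belongs to at least k − ord(U,x) sets among all
families; equivalently k + 1 ≤ (number of sets containing x) + #{i : x ∈ U_i}. -/
theorem stmt4 {X : Type*} [MetricSpace X] [CompactSpace X] (r k : ℕ)
    (U : Fin r → Set X) (hopen : ∀ i, IsOpen (U i)) (hcov : (⋃ i, U i) = Set.univ) :
    ∃ (m : Fin k → ℕ) (C : (j : Fin k) → Fin (m j) → Set X),
      (∀ j i, IsClosed (C j i)) ∧
      (∀ j, Pairwise fun i i' => Disjoint (C j i) (C j i')) ∧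
      (∀ j i, ∃ i', C j i ⊆ U i') ∧
      (∀ x : X,
        k + 1 ≤ (∑ j : Fin k, (Finset.univ.filter fun i => x ∈ C j i).card) +
          (Finset.univ.filter fun i => x ∈ U i).card) := by
  classical
  rcases Nat.eq_zero_or_pos r with hr | hr
  · -- r = 0 : X is empty
    have hX : IsEmpty X := by
      subst hr
      rw [Set.iUnion_of_empty] at hcov
      exact Set.univ_eq_empty_iff.mp hcov.symm
    exact ⟨fun _ => 0, fun j i => i.elim0, fun j i => i.elim0,
      fun j i i' h => i.elim0, fun j i => i.elim0, fun x => (hX.false x).elim⟩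
  -- main case
  obtain ⟨f, hf⟩ := PartitionOfUnity.exists_isSubordinate isClosed_univ U hopen
    (by rw [hcov])
  set φ : Fin r → X → ℝ := fun a x => f a x with hφdef
  have hcont : ∀ a, Continuous (φ a) := fun a => (f a).continuous
  have hsum : ∀ x : X, ∑ a : Fin r, φ a x = 1 := by
    intro x
    have := f.sum_eq_one (Set.mem_univ x)
    rwa [finsum_eq_sum_of_fintype] at this
  have hposU : ∀ a x, 0 < φ a x → x ∈ U a := by
    intro a x h
    exact hf a (subset_tsupport _ (by simpa [Function.mem_support] using ne_of_gt h))
  have hrR : (0:ℝ) < (r:ℝ) := by exact_mod_cast hr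
  set c : ℝ := 1 / r with hcdef
  have hc : 0 < c := one_div_pos.mpr hrR
  have hbig : ∀ x : X, ∃ a, c ≤ φ a x := by
    intro x
    by_contra h
    push_neg at h
    have hlt : ∑ a : Fin r, φ a x < ∑ a : Fin r, c :=
      Finset.sum_lt_sum_of_nonempty ⟨⟨0, hr⟩, Finset.mem_univ _⟩ (fun a _ => h a)
    rw [hsum, Finset.sum_const, Finset.card_univ, Fintype.card_fin, nsmul_eq_mul,
      hcdef] at hlt
    rw [mul_one_div, div_self (ne_of_gt hrR)] at hlt
    exact lt_irrefl _ hlt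
  set N : ℝ := 2 * k + 2 with hNdef
  have hN : 0 < N := by rw [hNdef]; positivity
  set ε : Fin k → ℝ := fun j => c * (2 * (j : ℕ) + 1) / N with hεdef
  set δ : Fin k → ℝ := fun j => c * (2 * (j : ℕ) + 2) / N with hδdef
  have hεpos : ∀ j, 0 < ε j := by
    intro j
    rw [hεdef]
    have : (0:ℝ) ≤ (j:ℕ) := Nat.cast_nonneg _
    apply div_pos (by nlinarith) hN
  have hεδ : ∀ j, ε j < δ j := by
    intro j
    rw [hεdef, hδdef, div_lt_div_iff₀ hN hN]
    nlinarith
  have hδc : ∀ j, δ j < c := by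
    intro j
    rw [hδdef, div_lt_iff₀ hN]
    have hjk : ((j:ℕ) : ℝ) < (k : ℝ) := by exact_mod_cast j.isLt
    rw [hNdef]
    nlinarith
  have hεc : ∀ j, ε j < c := fun j => lt_trans (hεδ j) (hδc j)
  have hδε : ∀ j j' : Fin k, j < j' → δ j ≤ ε j' := by
    intro j j' hjj
    rw [hεdef, hδdef, div_le_div_iff₀ hN hN]
    have : ((j:ℕ) : ℝ) + 1 ≤ ((j':ℕ) : ℝ) := by
      have : (j:ℕ) + 1 ≤ (j':ℕ) := hjj
      exact_mod_cast this
    nlinarith [mul_pos hc hN]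
  -- the families
  set D : Fin k → Finset (Fin r) → Set X := fun j S =>
    ⋂ a : Fin r, if a ∈ S then φ a ⁻¹' Set.Ici (δ j) else φ a ⁻¹' Set.Iic (ε j)
    with hDdef
  have hmemD : ∀ j S x, x ∈ D j S ↔
      ((∀ a ∈ S, δ j ≤ φ a x) ∧ ∀ a ∉ S, φ a x ≤ ε j) := by
    intro j S x
    rw [hDdef]
    simp only [Set.mem_iInter]
    constructor
    · intro h
      refine ⟨fun a ha => ?_, fun a ha => ?_⟩
      · have := h a; rw [if_pos ha] at this; exact this
      · have := h a; rw [if_neg ha] at this; exact this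
    · intro h a
      by_cases ha : a ∈ S
      · rw [if_pos ha]; exact h.1 a ha
      · rw [if_neg ha]; exact h.2 a ha
  have hDclosed : ∀ j S, IsClosed (D j S) := by
    intro j S
    apply isClosed_iInter
    intro a
    by_cases ha : a ∈ S
    · rw [if_pos ha]; exact isClosed_Ici.preimage (hcont a)
    · rw [if_neg ha]; exact isClosed_Iic.preimage (hcont a)
  set mm : ℕ := Fintype.card (Finset (Fin r)) with hmm
  set e : Finset (Fin r) ≃ Fin mm := Fintype.equivFin (Finset (Fin r)) with he
  refine ⟨fun _ => mm, fun j i => D j (e.symm i), fun j i => hDclosed _ _, ?_, ?_, ?_⟩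
  · -- pairwise disjoint
    intro j i i' hne
    have hST : e.symm i ≠ e.symm i' := fun h => hne (by simpa using congrArg e h)
    obtain ⟨a, ha⟩ : ∃ a, (a ∈ e.symm i ∧ a ∉ e.symm i') ∨
        (a ∈ e.symm i' ∧ a ∉ e.symm i) := by
      by_contra h
      push_neg at h
      exact hST (Finset.ext fun a => ⟨(h a).1, (h a).2⟩)
    rw [Set.disjoint_left]
    intro x hx hx'
    rw [hmemD] at hx hx'
    rcases ha with ⟨h1, h2⟩ | ⟨h1, h2⟩
    · have hA := hx.1 a h1
      have hB := hx'.2 a h2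
      have := hεδ j
      linarith
    · have hA := hx'.1 a h1
      have hB := hx.2 a h2
      have := hεδ j
      linarith
  · -- refinement
    intro j i
    by_cases hS : (e.symm i).Nonempty
    · obtain ⟨a, ha⟩ := hS
      refine ⟨a, fun x hx => ?_⟩
      have hδx := ((hmemD j _ x).mp hx).1 a ha
      have : 0 < φ a x := lt_of_lt_of_le (lt_trans (hεpos j) (hεδ j)) hδx
      exact hposU a x this
    · refine ⟨⟨0, hr⟩, fun x hx => ?_⟩
      exfalso
      obtain ⟨a, hax⟩ := hbig x
      have ha : a ∉ e.symm i := fun h => hS ⟨a, h⟩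
      have := ((hmemD j _ x).mp hx).2 a ha
      have := hεc j
      linarith
  · -- coverage count
    intro x
    obtain ⟨a₀, ha₀⟩ := hbig x
    set n := (Finset.univ.filter fun a => x ∈ U a).card with hn
    set G := Finset.univ.filter (fun a : Fin r => 0 < φ a x ∧ φ a x < c) with hG
    have hGn : G.card + 1 ≤ n := by
      have h2 : a₀ ∉ G := by
        rw [hG]
        simp only [Finset.mem_filter, Finset.mem_univ, true_and, not_and, not_lt]
        intro _; exact ha₀
      have h1 : insert a₀ G ⊆ Finset.univ.filter fun a => x ∈ U a := by
        intro a ha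
        rcases Finset.mem_insert.mp ha with rfl | haG
        · exact Finset.mem_filter.mpr ⟨Finset.mem_univ _, hposU a x (lt_of_lt_of_le hc ha₀)⟩
        · rw [hG] at haG
          exact Finset.mem_filter.mpr ⟨Finset.mem_univ _,
            hposU a x (Finset.mem_filter.mp haG).2.1⟩
      calc G.card + 1 = (insert a₀ G).card := (Finset.card_insert_of_notMem h2).symm
        _ ≤ n := Finset.card_le_card h1
    set Missed := Finset.univ.filter (fun j : Fin k => ∀ i, x ∉ D j (e.symm i))
      with hMissed
    have hgap : ∀ j ∈ Missed, ∃ a, a ∈ G ∧ ε j < φ a x ∧ φ a x < δ j := by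
      intro j hj
      set S := Finset.univ.filter (fun a : Fin r => ε j < φ a x) with hSdef
      have hj' : x ∉ D j (e.symm (e S)) := (Finset.mem_filter.mp hj).2 (e S)
      rw [Equiv.symm_apply_apply, hmemD] at hj'
      have hB : ∀ a ∉ S, φ a x ≤ ε j := by
        intro a ha
        rw [hSdef] at ha
        simp only [Finset.mem_filter, Finset.mem_univ, true_and, not_lt] at ha
        exact ha
      have hA : ¬ ∀ a ∈ S, δ j ≤ φ a x := fun hA => hj' ⟨hA, hB⟩
      push_neg at hA
      obtain ⟨a, haS, hlt⟩ := hA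
      have h1 : ε j < φ a x := by
        rw [hSdef] at haS
        exact (Finset.mem_filter.mp haS).2
      refine ⟨a, ?_, h1, hlt⟩
      rw [hG]
      exact Finset.mem_filter.mpr ⟨Finset.mem_univ _,
        lt_trans (hεpos j) h1, lt_trans hlt (hδc j)⟩
    have hMG : Missed.card ≤ G.card := by
      have h' : ∀ j : Fin k, ∃ a : Fin r,
          j ∈ Missed → (a ∈ G ∧ ε j < φ a x ∧ φ a x < δ j) := by
        intro j
        by_cases hj : j ∈ Missed
        · obtain ⟨a, h⟩ := hgap j hj
          exact ⟨a, fun _ => h⟩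
        · exact ⟨⟨0, hr⟩, fun h => absurd h hj⟩
      choose g hg using h'
      apply Finset.card_le_card_of_injOn g (fun j hj => (hg j hj).1)
      intro j hj j' hj' hgg
      by_contra hne
      have hj2 := hg j (Finset.mem_coe.mp hj)
      have hj2' := hg j' (Finset.mem_coe.mp hj')
      rcases lt_or_gt_of_ne hne with hlt | hlt
      · have h3 := hδε j j' hlt
        have h1 := hj2.2.2
        have h2 := hj2'.2.1
        rw [hgg] at h1
        linarith
      · have h3 := hδε j' j hlt
        have h1 := hj2'.2.2
        have h2 := hj2.2.1
        rw [← hgg] at h1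
        linarith
    have hcnt : ∀ j ∉ Missed,
        1 ≤ (Finset.univ.filter fun i => x ∈ D j (e.symm i)).card := by
      intro j hj
      rw [Nat.one_le_iff_ne_zero, ← Nat.pos_iff_ne_zero, Finset.card_pos]
      rw [hMissed] at hj
      simp only [Finset.mem_filter, Finset.mem_univ, true_and, not_forall, not_not] at hj
      obtain ⟨i, hi⟩ := hj
      exact ⟨i, Finset.mem_filter.mpr ⟨Finset.mem_univ _, hi⟩⟩
    have hsum2 : k - Missed.card ≤
        ∑ j : Fin k, (Finset.univ.filter fun i => x ∈ D j (e.symm i)).card := by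
      have h1 : (Finset.univ \ Missed).card =
          ∑ j ∈ Finset.univ \ Missed, 1 := by
        rw [Finset.card_eq_sum_ones]
      have h2 : ∑ j ∈ Finset.univ \ Missed, 1 ≤
          ∑ j ∈ Finset.univ \ Missed,
            (Finset.univ.filter fun i => x ∈ D j (e.symm i)).card := by
        apply Finset.sum_le_sum
        intro j hj
        exact hcnt j (Finset.mem_sdiff.mp hj).2
      have h3 : ∑ j ∈ Finset.univ \ Missed,
            (Finset.univ.filter fun i => x ∈ D j (e.symm i)).card ≤
          ∑ j : Fin k, (Finset.univ.filter fun i => x ∈ D j (e.symm i)).card := by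
        apply Finset.sum_le_sum_of_subset (Finset.sdiff_subset)
      have h4 : (Finset.univ \ Missed).card = k - Missed.card := by
        rw [Finset.card_sdiff_of_subset (Finset.subset_univ _), Finset.card_univ, Fintype.card_fin]
      omega
    have hMk : Missed.card ≤ k := by
      calc Missed.card ≤ (Finset.univ : Finset (Fin k)).card :=
        Finset.card_le_card (Finset.subset_univ _)
        _ = k := by rw [Finset.card_univ, Fintype.card_fin]
    beta_reduce
    omega
end

section
/- Let X be a compact metric space, (X,P) and (Y,Q) topological-measure pairs, and f : X → Y an embedding of (X,P) into (Y,Q) (i.e. f is a topological embedding with f_*(P) ⊆ Q). Then dim(X,P) ≤ dim(Y,Q). -/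
open MeasureTheory Set
open scoped ENNReal Classical

/-- The order of a finite collection of sets at a point: (number of members containing x) − 1. -/
noncomputable def ordAt {X : Type*} (V : Finset (Set X)) (x : X) : ℝ :=
  ((V.filter fun A => x ∈ A).card : ℝ) - 1

/-- A finite open cover. -/
def IsOpenCover {X : Type*} [TopologicalSpace X] (U : Finset (Set X)) : Prop :=
  (∀ A ∈ U, IsOpen A) ∧ ⋃₀ (U : Set (Set X)) = Set.univ

/-- `Refines U V` : every element of `V` is contained in some element of `U` (V ⪰ U). -/
def Refines {X : Type*} (U V : Finset (Set X)) : Prop :=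
  ∀ B ∈ V, ∃ A ∈ U, B ⊆ A

/-- ord(V,P) = sup over μ ∈ P of ∫ ord(V,x) dμ(x), as an extended real
(−∞ when P = ∅). -/
noncomputable def ordP {X : Type*} [TopologicalSpace X] [MeasurableSpace X]
    (V : Finset (Set X)) (P : Set (ProbabilityMeasure X)) : EReal :=
  ⨆ μ ∈ P, ((∫ x, ordAt V x ∂(μ : Measure X) : ℝ) : EReal)

/-- dim(X,P) = sup over finite open covers U of inf over finite open covers V refining U
of ord(V,P). -/
noncomputable def dimPair (X : Type*) [TopologicalSpace X] [MeasurableSpace X]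
    (P : Set (ProbabilityMeasure X)) : EReal :=
  ⨆ U ∈ {U : Finset (Set X) | IsOpenCover U},
    ⨅ V ∈ {V : Finset (Set X) | IsOpenCover V ∧ Refines U V}, ordP V P

lemma ordAt_eq_sum {X : Type*} (V : Finset (Set X)) (x : X) :
    ordAt V x = (∑ A ∈ V, if x ∈ A then (1:ℝ) else 0) - 1 := by
  unfold ordAt
  congr 1
  rw [Finset.card_filter]
  push_cast
  rfl

lemma ordAt_measurable {X : Type*} [MeasurableSpace X] (V : Finset (Set X))
    (h : ∀ A ∈ V, MeasurableSet A) : Measurable (ordAt V) := by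
  have : (fun x => ordAt V x) = fun x => (∑ A ∈ V, if x ∈ A then (1:ℝ) else 0) - 1 := by
    ext x; exact ordAt_eq_sum V x
  rw [show ordAt V = fun x => (∑ A ∈ V, if x ∈ A then (1:ℝ) else 0) - 1 from this]
  apply Measurable.sub _ measurable_const
  apply Finset.measurable_sum
  intro A hA
  exact Measurable.ite (h A hA) measurable_const measurable_const

lemma ordAt_abs_le {X : Type*} (V : Finset (Set X)) (x : X) :
    |ordAt V x| ≤ V.card + 1 := by
  unfold ordAt
  have h1 : ((V.filter fun A => x ∈ A).card : ℝ) ≤ V.card := by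
    exact_mod_cast Finset.card_filter_le V _
  have h0 : (0:ℝ) ≤ ((V.filter fun A => x ∈ A).card : ℝ) := by positivity
  rw [abs_le]; constructor <;> linarith

lemma ordAt_preimage_le {X Y : Type*} (f : X → Y) (V' : Finset (Set Y)) (x : X) :
    ordAt (V'.image (f ⁻¹' ·)) x ≤ ordAt V' (f x) := by
  unfold ordAt
  have hsub : ((V'.image (f ⁻¹' ·)).filter fun A => x ∈ A) ⊆
      ((V'.filter fun B => f x ∈ B).image (f ⁻¹' ·)) := by
    intro A hA
    simp only [Finset.mem_filter, Finset.mem_image] at hA ⊢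
    obtain ⟨⟨B, hB, rfl⟩, hx⟩ := hA
    exact ⟨B, ⟨hB, hx⟩, rfl⟩
  have hc := (Finset.card_le_card hsub).trans Finset.card_image_le
  have : (((V'.image (f ⁻¹' ·)).filter fun A => x ∈ A).card : ℝ) ≤
      ((V'.filter fun B => f x ∈ B).card : ℝ) := by exact_mod_cast hc
  linarith

/-- Monotonicity of dimension of topological-measure pairs under embeddings. -/
theorem stmt5 {X Y : Type*}
    [MetricSpace X] [CompactSpace X] [MeasurableSpace X] [BorelSpace X]
    [MetricSpace Y] [CompactSpace Y] [MeasurableSpace Y] [BorelSpace Y]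
    (P : Set (ProbabilityMeasure X)) (Q : Set (ProbabilityMeasure Y))
    (hPc : IsClosed P) (hQc : IsClosed Q)
    (hPconv : ∀ μ ν : ProbabilityMeasure X, μ ∈ P → ν ∈ P → ∀ a b : ℝ≥0∞, a + b = 1 →
      ∀ σ : ProbabilityMeasure X,
        (σ : Measure X) = a • (μ : Measure X) + b • (ν : Measure X) → σ ∈ P)
    (hQconv : ∀ μ ν : ProbabilityMeasure Y, μ ∈ Q → ν ∈ Q → ∀ a b : ℝ≥0∞, a + b = 1 →
      ∀ σ : ProbabilityMeasure Y,
        (σ : Measure Y) = a • (μ : Measure Y) + b • (ν : Measure Y) → σ ∈ Q)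
    (f : X → Y) (hf : Topology.IsEmbedding f)
    (hmap : ∀ μ ∈ P, ∃ ν ∈ Q, (ν : Measure Y) = (μ : Measure X).map f) :
    dimPair X P ≤ dimPair Y Q := by
  rcases P.eq_empty_or_nonempty with rfl | ⟨μ₀, hμ₀⟩
  · -- dimPair X ∅ = ⊥
    refine iSup₂_le fun U hU => ?_
    refine le_trans (iInf₂_le U ⟨hU, fun B hB => ⟨B, hB, subset_rfl⟩⟩) ?_
    simp [ordP]
  · -- X is nonempty since P contains a probability measure
    haveI hXne : Nonempty X := by
      by_contra h
      rw [not_nonempty_iff] at h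
      have h1 : (μ₀ : Measure X) univ = 1 := measure_univ
      rw [Set.univ_eq_empty_iff.mpr h] at h1
      simp at h1
    have hfm : Measurable f := hf.continuous.measurable
    refine iSup₂_le fun U hU => ?_
    obtain ⟨x₀⟩ := hXne
    have hx₀ : x₀ ∈ ⋃₀ (U : Set (Set X)) := hU.2 ▸ mem_univ x₀
    obtain ⟨A₀, hA₀U, -⟩ := hx₀
    -- choose open extensions in Y for elements of U
    have hext : ∀ A ∈ U, ∃ A' : Set Y, IsOpen A' ∧ f ⁻¹' A' = A := by
      intro A hA
      exact hf.toIsInducing.isOpen_iff.mp (hU.1 A hA)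
    choose! g hg1 hg2 using hext
    set W : Set Y := (Set.range f)ᶜ with hW
    have hWopen : IsOpen W := (isCompact_range hf.continuous).isClosed.isOpen_compl
    set U' : Finset (Set Y) := insert W (U.image g) with hU'def
    have hU' : IsOpenCover U' := by
      constructor
      · intro A' hA'
        rcases Finset.mem_insert.mp hA' with rfl | hA'
        · exact hWopen
        · obtain ⟨A, hA, rfl⟩ := Finset.mem_image.mp hA'
          exact hg1 A hA
      · ext y
        simp only [mem_univ, iff_true, mem_sUnion]
        by_cases hy : y ∈ Set.range f
        · obtain ⟨x, rfl⟩ := hy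
          have hx : x ∈ ⋃₀ (U : Set (Set X)) := hU.2 ▸ mem_univ x
          obtain ⟨A, hAU, hxA⟩ := hx
          refine ⟨g A, ?_, ?_⟩
          · exact_mod_cast Finset.mem_insert.mpr (Or.inr (Finset.mem_image_of_mem g hAU))
          · rw [← hg2 A hAU] at hxA; exact hxA
        · exact ⟨W, by exact_mod_cast Finset.mem_insert_self W _, hy⟩
    refine le_trans ?_
      (le_iSup₂ (f := fun (U' : Finset (Set Y)) (_ : U' ∈ {U : Finset (Set Y) | IsOpenCover U}) =>
        ⨅ V ∈ {V : Finset (Set Y) | IsOpenCover V ∧ Refines U' V}, ordP V Q) U' hU')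
    refine le_iInf₂ fun V' hV' => ?_
    obtain ⟨hV'cov, hV'ref⟩ := hV'
    set V : Finset (Set X) := V'.image (f ⁻¹' ·) with hVdef
    have hVcov : IsOpenCover V := by
      constructor
      · intro A hA
        obtain ⟨B, hB, rfl⟩ := Finset.mem_image.mp hA
        exact (hV'cov.1 B hB).preimage hf.continuous
      · ext x
        simp only [mem_univ, iff_true, mem_sUnion]
        have : f x ∈ ⋃₀ (V' : Set (Set Y)) := hV'cov.2 ▸ mem_univ (f x)
        obtain ⟨B, hBV, hxB⟩ := this
        exact ⟨f ⁻¹' B, by exact_mod_cast Finset.mem_image_of_mem _ hBV, hxB⟩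
    have hVref : Refines U V := by
      intro A hA
      obtain ⟨B, hB, rfl⟩ := Finset.mem_image.mp hA
      obtain ⟨A', hA'U', hBA'⟩ := hV'ref B hB
      rcases Finset.mem_insert.mp hA'U' with rfl | hA'
      · refine ⟨A₀, hA₀U, ?_⟩
        intro x hx
        exact absurd (hBA' hx) (by simp [hW])
      · obtain ⟨A'', hA'', rfl⟩ := Finset.mem_image.mp hA'
        exact ⟨A'', hA'', by rw [← hg2 A'' hA'']; exact preimage_mono hBA'⟩
    refine le_trans (iInf₂_le V ⟨hVcov, hVref⟩) ?_
    -- ordP V P ≤ ordP V' Q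
    refine iSup₂_le fun μ hμ => ?_
    obtain ⟨ν, hνQ, hνeq⟩ := hmap μ hμ
    refine le_trans ?_ (le_iSup₂ (f := fun (ν : ProbabilityMeasure Y) (_ : ν ∈ Q) =>
      ((∫ y, ordAt V' y ∂(ν : Measure Y) : ℝ) : EReal)) ν hνQ)
    rw [EReal.coe_le_coe_iff]
    have hmeasV' : ∀ B ∈ V', MeasurableSet B := fun B hB => (hV'cov.1 B hB).measurableSet
    have hmeasV : ∀ A ∈ V, MeasurableSet A := by
      intro A hA
      obtain ⟨B, hB, rfl⟩ := Finset.mem_image.mp hA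
      exact hfm (hmeasV' B hB)
    have hmono := ordAt_preimage_le f V'
    have int1 : Integrable (ordAt V) (μ : Measure X) := by
      refine Integrable.mono' (integrable_const ((V.card : ℝ) + 1))
        (ordAt_measurable V hmeasV).aestronglyMeasurable ?_
      filter_upwards with x
      simpa using ordAt_abs_le V x
    have int2 : Integrable (fun x => ordAt V' (f x)) (μ : Measure X) := by
      refine Integrable.mono' (integrable_const ((V'.card : ℝ) + 1))
        (((ordAt_measurable V' hmeasV').comp hfm)).aestronglyMeasurable ?_
      filter_upwards with x
      simpa using ordAt_abs_le V' (f x)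
    calc ∫ x, ordAt V x ∂(μ : Measure X)
        ≤ ∫ x, ordAt V' (f x) ∂(μ : Measure X) := integral_mono int1 int2 hmono
      _ = ∫ y, ordAt V' y ∂((μ : Measure X).map f) :=
          (integral_map hfm.aemeasurable (ordAt_measurable V' hmeasV').aestronglyMeasurable).symm
      _ = ∫ y, ordAt V' y ∂(ν : Measure Y) := by rw [hνeq]
end

section
/- Let (X,T) be a dynamical system on a compact metric space with dim(X,T) = 0. Then for any ε > 0 there exists a finite open cover U of X with mesh(U) < ε and cap(⋃_{U ∈ U} ∂U, T) < ε. -/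
open MeasureTheory Set
open scoped ENNReal Classical

/-- The set of T-invariant Borel probability measures. -/
def invProb {X Γ : Type*} [TopologicalSpace X] [MeasurableSpace X]
    (T : Γ → X ≃ₜ X) : Set (ProbabilityMeasure X) :=
  {μ | ∀ γ : Γ, (μ : Measure X).map (T γ) = (μ : Measure X)}

/-- The capacity of a Borel set with respect to the action:
cap(A,T) = sup over invariant μ of μ(A). -/
noncomputable def cap {X Γ : Type*} [TopologicalSpace X] [MeasurableSpace X]
    (T : Γ → X ≃ₜ X) (A : Set X) : ℝ≥0∞ :=
  ⨆ μ ∈ invProb T, (μ : Measure X) A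

/-- dim(X,T) = sup over finite open covers U of inf over finite open covers V refining U
of sup over invariant μ of ∫ ord(V,x) dμ(x). -/
noncomputable def dimDyn {X Γ : Type*} [TopologicalSpace X] [MeasurableSpace X]
    (T : Γ → X ≃ₜ X) : ℝ≥0∞ :=
  ⨆ U ∈ {U : Finset (Set X) | IsOpenCover U},
    ⨅ V ∈ {V : Finset (Set X) | IsOpenCover V ∧ Refines U V},
      ⨆ μ ∈ invProb T, ENNReal.ofReal (∫ x, ordAt V x ∂(μ : Measure X))

/-- If dim(X,T) = 0 then for every ε > 0 there is a finite open cover with mesh < ε whose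
union of boundaries has capacity < ε. -/
theorem stmt8 {X Γ : Type*} [MetricSpace X] [CompactSpace X] [MeasurableSpace X] [BorelSpace X]
    [Group Γ] [Countable Γ] (T : Γ → X ≃ₜ X)
    (hT : ∀ γ γ' : Γ, ∀ x : X, T (γ * γ') x = T γ (T γ' x))
    (hdim : dimDyn T = 0) :
    ∀ ε : ℝ, 0 < ε → ∃ U : Finset (Set X), IsOpenCover U ∧
      (∀ A ∈ U, Metric.diam A < ε) ∧
      cap T (⋃ A ∈ U, frontier A) < ENNReal.ofReal ε := by
  classical
  intro ε hε
  -- Step 1: an initial cover by balls of radius ε/3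
  obtain ⟨t, ht⟩ := isCompact_univ.elim_finite_subcover
    (fun x : X => Metric.ball x (ε / 3)) (fun _ => Metric.isOpen_ball)
    (fun x _ => mem_iUnion.2 ⟨x, Metric.mem_ball_self (by linarith)⟩)
  set U₀ : Finset (Set X) := t.image fun x => Metric.ball x (ε / 3) with hU₀def
  have hU₀ : IsOpenCover U₀ := by
    constructor
    · intro A hA
      simp only [hU₀def, Finset.mem_image] at hA
      obtain ⟨x, _, rfl⟩ := hA
      exact Metric.isOpen_ball
    · apply eq_univ_of_univ_subset
      intro x hx
      obtain ⟨s, hs, hxs⟩ := mem_iUnion₂.1 (ht (mem_univ x))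
      exact ⟨Metric.ball s (ε / 3), by
        simp only [hU₀def, Finset.coe_image, Set.mem_image, Finset.mem_coe]
        exact ⟨s, hs, rfl⟩, hxs⟩
  -- every subset of an element of U₀ has diameter < ε
  have hU₀diam : ∀ A ∈ U₀, ∀ s : Set X, s ⊆ A → Metric.diam s < ε := by
    intro A hA s hsA
    simp only [hU₀def, Finset.mem_image] at hA
    obtain ⟨x, _, rfl⟩ := hA
    have h1 : Metric.diam s ≤ Metric.diam (Metric.ball x (ε / 3)) :=
      Metric.diam_mono hsA Metric.isBounded_ball
    have h2 : Metric.diam (Metric.ball x (ε / 3)) ≤ 2 * (ε / 3) := Metric.diam_ball (by linarith)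
    linarith
  -- Step 2: extract a refinement V with small order integral from dim = 0
  have h1 : (⨅ V ∈ {V : Finset (Set X) | IsOpenCover V ∧ Refines U₀ V},
      ⨆ μ ∈ invProb T, ENNReal.ofReal (∫ x, ordAt V x ∂(μ : Measure X))) ≤ dimDyn T :=
    le_iSup₂ (f := fun (U : Finset (Set X)) (_ : U ∈ {U : Finset (Set X) | IsOpenCover U}) =>
      ⨅ V ∈ {V : Finset (Set X) | IsOpenCover V ∧ Refines U V},
        ⨆ μ ∈ invProb T, ENNReal.ofReal (∫ x, ordAt V x ∂(μ : Measure X))) U₀ hU₀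
  rw [hdim] at h1
  have h2 : (⨅ V ∈ {V : Finset (Set X) | IsOpenCover V ∧ Refines U₀ V},
      ⨆ μ ∈ invProb T, ENNReal.ofReal (∫ x, ordAt V x ∂(μ : Measure X)))
      < ENNReal.ofReal ε := lt_of_le_of_lt h1 (ENNReal.ofReal_pos.2 hε)
  simp only [iInf_lt_iff] at h2
  obtain ⟨V, hVmem, hVlt⟩ := h2
  obtain ⟨hVcover, hVref⟩ := hVmem
  -- Step 3: index the sets of V
  set k := V.card with hk
  set e := V.equivFin with he
  set v : Fin k → Set X := fun i => ((e.symm i : V) : Set X) with hv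
  have hvV : ∀ i, v i ∈ V := fun i => (e.symm i).2
  have hvinj : Function.Injective v := fun i j h => e.symm.injective (Subtype.ext h)
  have hvopen : ∀ i, IsOpen (v i) := fun i => hVcover.1 _ (hvV i)
  have hvcover : ⋃ i, v i = univ := by
    apply eq_univ_of_univ_subset
    intro x _
    have hx : x ∈ ⋃₀ (V : Set (Set X)) := by rw [hVcover.2]; exact mem_univ x
    obtain ⟨A, hA, hxA⟩ := hx
    refine mem_iUnion.2 ⟨e ⟨A, hA⟩, ?_⟩
    simp only [hv, Equiv.symm_apply_apply]
    exact hxA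
  -- Step 4: shrink twice
  obtain ⟨w'', hw''U, hw''o, hw''cl⟩ := exists_iUnion_eq_closure_subset hvopen
    (fun x => Set.toFinite _) hvcover
  obtain ⟨w, hwU, hwo, hwcl⟩ := exists_iUnion_eq_closure_subset hw''o
    (fun x => Set.toFinite _) hw''U
  -- Step 5: define the new cover
  set u : Fin k → Set X := fun i => w'' i \ ⋃ (j : Fin k) (_ : j < i), closure (w j) with hu
  have huopen : ∀ i, IsOpen (u i) := by
    intro i
    apply (hw''o i).sdiff
    exact Set.Finite.isClosed_biUnion (Set.toFinite _) (fun j _ => isClosed_closure)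
  have hucover : ⋃ i, u i = univ := by
    apply eq_univ_of_univ_subset
    intro x _
    have hxw : ∃ i, x ∈ closure (w i) := by
      have : x ∈ ⋃ i, w i := hwU ▸ mem_univ x
      obtain ⟨i, hi⟩ := mem_iUnion.1 this
      exact ⟨i, subset_closure hi⟩
    set F : Finset (Fin k) := Finset.univ.filter (fun i => x ∈ closure (w i)) with hF
    have hFne : F.Nonempty := by
      obtain ⟨i, hi⟩ := hxw
      exact ⟨i, by simp [hF, hi]⟩
    set i₀ := F.min' hFne with hi₀
    have hi₀F : i₀ ∈ F := F.min'_mem hFne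
    have hxi₀ : x ∈ closure (w i₀) := by simpa [hF] using hi₀F
    refine mem_iUnion.2 ⟨i₀, ?_, ?_⟩
    · exact hwcl i₀ hxi₀
    · intro hmem
      obtain ⟨j, hjlt, hjx⟩ := by
        simpa using hmem
      have : i₀ ≤ j := F.min'_le j (by simp [hF, hjx])
      exact absurd hjlt (not_lt.2 this)
  -- the overlap set
  set E : Set X := {x | 2 ≤ (V.filter fun A => x ∈ A).card} with hE
  -- frontiers lie in the overlap set
  have hfront : ∀ i, frontier (u i) ⊆ E := by
    intro i x hx
    rw [(huopen i).frontier_eq] at hx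
    obtain ⟨hxcl, hxnot⟩ := hx
    have hxvi : x ∈ v i := by
      have h3 : x ∈ closure (w'' i) := closure_mono diff_subset hxcl
      exact hw''cl i h3
    -- find another index j ≠ i with x ∈ v j
    have : ∃ j, j ≠ i ∧ x ∈ v j := by
      by_cases hcase : x ∈ w'' i
      · -- then x must be in some closure (w j) with j < i
        have : x ∈ ⋃ (j : Fin k) (_ : j < i), closure (w j) := by
          by_contra hcon
          exact hxnot ⟨hcase, hcon⟩
        obtain ⟨j, hjlt, hjx⟩ := by simpa using this
        exact ⟨j, ne_of_lt hjlt, hw''cl j (subset_closure (hwcl j hjx))⟩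
      · -- x ∉ w'' i, but x ∈ some w j, and j ≠ i since closure (w i) ⊆ w'' i
        have : x ∈ ⋃ j, w j := hwU ▸ mem_univ x
        obtain ⟨j, hj⟩ := mem_iUnion.1 this
        have hji : j ≠ i := by
          rintro rfl
          exact hcase (hwcl j (subset_closure hj))
        exact ⟨j, hji, hw''cl j (subset_closure (hwcl j (subset_closure hj)))⟩
    obtain ⟨j, hji, hxvj⟩ := this
    -- two distinct members of V contain x
    have hsub : {v i, v j} ⊆ V.filter fun A => x ∈ A := by
      intro A hA
      rcases Finset.mem_insert.1 hA with rfl | hA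
      · exact Finset.mem_filter.2 ⟨hvV i, hxvi⟩
      · rw [Finset.mem_singleton.1 hA]
        exact Finset.mem_filter.2 ⟨hvV j, hxvj⟩
    have hcard2 : ({v i, v j} : Finset (Set X)).card = 2 := by
      rw [Finset.card_insert_of_notMem (by
        simp only [Finset.mem_singleton]
        exact fun h => hji (hvinj h).symm), Finset.card_singleton]
    calc (2 : ℕ) = ({v i, v j} : Finset (Set X)).card := hcard2.symm
      _ ≤ (V.filter fun A => x ∈ A).card := Finset.card_le_card hsub
  -- measurability of the counting function
  have hfmeas : Measurable (fun x => ((V.filter fun A => x ∈ A).card : ℝ)) := by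
    have : (fun x => ((V.filter fun A => x ∈ A).card : ℝ))
        = fun x => ∑ A ∈ V, if x ∈ A then (1 : ℝ) else 0 := by
      funext x
      rw [Finset.card_filter]
      push_cast
      rfl
    rw [this]
    apply Finset.measurable_sum
    intro A hA
    exact Measurable.ite ((hVcover.1 A hA).measurableSet) measurable_const measurable_const
  have hEmeas : MeasurableSet E := by
    have : E = (fun x => ((V.filter fun A => x ∈ A).card : ℝ)) ⁻¹' (Set.Ici 2) := by
      ext x
      simp only [hE, Set.mem_setOf_eq, Set.mem_preimage, Set.mem_Ici]
      exact ⟨fun h => by exact_mod_cast h, fun h => by exact_mod_cast h⟩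
    rw [this]
    exact hfmeas measurableSet_Ici
  -- pointwise bound: indicator of E ≤ ordAt V
  have hptwise : ∀ x, E.indicator (1 : X → ℝ) x ≤ ordAt V x := by
    intro x
    have hx1 : 1 ≤ (V.filter fun A => x ∈ A).card := by
      have hx : x ∈ ⋃ i, v i := hvcover ▸ mem_univ x
      obtain ⟨i, hi⟩ := mem_iUnion.1 hx
      exact Finset.card_pos.2 ⟨v i, Finset.mem_filter.2 ⟨hvV i, hi⟩⟩
    by_cases hxE : x ∈ E
    · rw [Set.indicator_of_mem hxE, Pi.one_apply]
      have : (2 : ℝ) ≤ ((V.filter fun A => x ∈ A).card : ℝ) := by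
        exact_mod_cast hxE
      simp only [ordAt]
      linarith
    · rw [Set.indicator_of_notMem hxE]
      have : (1 : ℝ) ≤ ((V.filter fun A => x ∈ A).card : ℝ) := by exact_mod_cast hx1
      simp only [ordAt]
      linarith
  -- Step 6: the final cover
  refine ⟨Finset.image u Finset.univ, ⟨?_, ?_⟩, ?_, ?_⟩
  · intro A hA
    obtain ⟨i, _, rfl⟩ := Finset.mem_image.1 hA
    exact huopen i
  · apply eq_univ_of_univ_subset
    intro x hx
    obtain ⟨i, hi⟩ := mem_iUnion.1 (hucover ▸ mem_univ x)
    exact ⟨u i, by simp, hi⟩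
  · intro A hA
    obtain ⟨i, _, rfl⟩ := Finset.mem_image.1 hA
    obtain ⟨A₀, hA₀, hsub⟩ := hVref (v i) (hvV i)
    exact hU₀diam A₀ hA₀ (u i) (fun x hx => hsub (hw''cl i (subset_closure hx.1)))
  · -- capacity bound
    refine lt_of_le_of_lt ?_ hVlt
    apply iSup_mono
    intro μ
    apply iSup_mono
    intro hμ
    -- μ (⋃ boundaries) ≤ ofReal (∫ ordAt V)
    have hSE : (⋃ A ∈ Finset.image u Finset.univ, frontier A) ⊆ E := by
      intro x hx
      obtain ⟨A, hA, hxA⟩ := mem_iUnion₂.1 hx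
      obtain ⟨i, _, rfl⟩ := Finset.mem_image.1 hA
      exact hfront i hxA
    have hle1 : (μ : Measure X) (⋃ A ∈ Finset.image u Finset.univ, frontier A)
        ≤ (μ : Measure X) E := measure_mono hSE
    -- μ E ≤ ofReal ∫ ordAt
    have hint1 : Integrable (E.indicator (1 : X → ℝ)) (μ : Measure X) :=
      (integrable_const (1 : ℝ)).indicator hEmeas
    have hint2 : Integrable (fun x => ordAt V x) (μ : Measure X) := by
      have hmeas : Measurable (fun x => ordAt V x) := by
        simp only [ordAt]
        exact hfmeas.sub measurable_const
      apply Integrable.mono' (integrable_const ((V.card : ℝ) + 1))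
        hmeas.aestronglyMeasurable
      filter_upwards with x
      simp only [ordAt, Real.norm_eq_abs]
      have h1 : (V.filter fun A => x ∈ A).card ≤ V.card :=
        Finset.card_le_card (Finset.filter_subset _ _)
      have h2 : ((V.filter fun A => x ∈ A).card : ℝ) ≤ (V.card : ℝ) := by exact_mod_cast h1
      have h3 : (0 : ℝ) ≤ ((V.filter fun A => x ∈ A).card : ℝ) := Nat.cast_nonneg _
      rw [abs_le]
      constructor <;> linarith
    have hintle : ∫ x, E.indicator (1 : X → ℝ) x ∂(μ : Measure X)
        ≤ ∫ x, ordAt V x ∂(μ : Measure X) :=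
      integral_mono hint1 hint2 hptwise
    rw [integral_indicator_one hEmeas] at hintle
    have hμE : (μ : Measure X) E ≤ ENNReal.ofReal (∫ x, ordAt V x ∂(μ : Measure X)) := by
      rw [← ENNReal.ofReal_toReal (measure_ne_top (μ : Measure X) E)]
      exact ENNReal.ofReal_le_ofReal hintle
    exact hle1.trans hμE
end

section
/- A dynamical system (X,T) has the small boundary property if and only if dim(X,T) = 0. -/
/-!
From the small boundary property to `dim = 0`: cover `X` by finitely many open sets with
`T`-small boundaries, each inside a member of the given cover, and disjointify them. The pieces
miss only a closed set `K` inside the union of the boundaries, so `K` is null for every invariant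
measure. The invariant measures form a weak-* compact set on which `μ ↦ μ F` is upper
semicontinuous for closed `F`, so `K` has an open neighbourhood `O` of uniformly small measure.
Adding the sets `A ∩ O` gives a refinement whose order vanishes off `O`.

From `dim = 0` to the small boundary property: a refinement with small mean order of a shrunk
binary open cover `{B, B'}` splits into two open sets whose closures lie in the original pair and
whose overlap, where the order is at least `1`, has uniformly small measure. Iterating from the
cover `{U, {x}ᶜ}` gives nested pairs `(Eₙ, E'ₙ)`; the open set `(⋂ E'ₙ)ᶜ` contains `x`, lies in
`U`, and its frontier lies in every `Eₙ ∩ E'ₙ`.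
-/
open MeasureTheory Set
open scoped ENNReal Classical

open Filter Function Metric Topology

section OrdAt

variable {X : Type*}

lemma ordAt_nonneg {V : Finset (Set X)} (hV : ⋃₀ (V : Set (Set X)) = univ) (x : X) :
    0 ≤ ordAt V x := by
  obtain ⟨A, hA, hxA⟩ : x ∈ ⋃₀ (V : Set (Set X)) := hV ▸ mem_univ x
  have : 0 < (V.filter fun A => x ∈ A).card :=
    Finset.card_pos.2 ⟨A, Finset.mem_filter.2 ⟨hA, hxA⟩⟩
  rw [ordAt, sub_nonneg]
  exact_mod_cast this

lemma one_le_ordAt {V : Finset (Set X)} {x : X} {A B : Set X} (hA : A ∈ V) (hB : B ∈ V)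
    (hAB : A ≠ B) (hxA : x ∈ A) (hxB : x ∈ B) : 1 ≤ ordAt V x := by
  have hsub : ({A, B} : Finset (Set X)) ⊆ V.filter fun C => x ∈ C := by
    simp [Finset.insert_subset_iff, hA, hB, hxA, hxB]
  have := Finset.card_le_card hsub
  rw [Finset.card_pair hAB] at this
  rw [ordAt, le_sub_iff_add_le, one_add_one_eq_two]
  exact_mod_cast this

lemma ordAt_nonpos {V : Finset (Set X)} {x : X}
    (h : ∀ A ∈ V, ∀ B ∈ V, x ∈ A → x ∈ B → A = B) : ordAt V x ≤ 0 := by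
  have : (V.filter fun A => x ∈ A).card ≤ 1 := Finset.card_le_one.2 fun A hA B hB => by
    rw [Finset.mem_filter] at hA hB
    exact h A hA.1 B hB.1 hA.2 hB.2
  rw [ordAt, sub_nonpos]
  exact_mod_cast this

lemma ordAt_le_card (V : Finset (Set X)) (x : X) : ordAt V x ≤ V.card := by
  have : ((V.filter fun A => x ∈ A).card : ℝ) ≤ V.card := by
    exact_mod_cast Finset.card_filter_le V _
  rw [ordAt]
  linarith

variable [MeasurableSpace X] {V : Finset (Set X)} (μ : Measure X) [IsFiniteMeasure μ]

lemma integrable_ordAt (hV : ∀ A ∈ V, MeasurableSet A) : Integrable (ordAt V) μ := by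
  have : ordAt V = fun x => (∑ A ∈ V, A.indicator (fun _ => (1 : ℝ)) x) - 1 := by
    funext x
    simp only [ordAt, Finset.card_filter, Nat.cast_sum, Nat.cast_ite, Nat.cast_one, Nat.cast_zero,
      Set.indicator_apply]
  rw [this]
  exact (integrable_finsetSum _ fun A hA => (integrable_const 1).indicator (hV A hA)).sub
    (integrable_const 1)

lemma measure_le_ofReal_integral_ordAt (hcov : ⋃₀ (V : Set (Set X)) = univ)
    (hV : ∀ A ∈ V, MeasurableSet A) {S : Set X} (hS : MeasurableSet S)
    (h : ∀ x ∈ S, 1 ≤ ordAt V x) : μ S ≤ ENNReal.ofReal (∫ x, ordAt V x ∂μ) := by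
  have hle : S.indicator (1 : X → ℝ) ≤ ordAt V := fun x => by
    by_cases hx : x ∈ S
    · simpa [hx] using h x hx
    · simpa [hx] using ordAt_nonneg hcov x
  calc μ S = ENNReal.ofReal (∫ x, S.indicator (1 : X → ℝ) x ∂μ) := by
        rw [integral_indicator_one hS, measureReal_def, ENNReal.ofReal_toReal (measure_ne_top _ _)]
    _ ≤ ENNReal.ofReal (∫ x, ordAt V x ∂μ) :=
        ENNReal.ofReal_le_ofReal (integral_mono ((integrable_const 1).indicator hS)
          (integrable_ordAt μ hV) hle)

lemma integral_ordAt_le_card_mul (hV : ∀ A ∈ V, MeasurableSet A) {O : Set X}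
    (hO : MeasurableSet O) (h : ∀ x ∉ O, ordAt V x ≤ 0) :
    ∫ x, ordAt V x ∂μ ≤ V.card * μ.real O := by
  have hle : ordAt V ≤ O.indicator (fun _ => (V.card : ℝ)) := fun x => by
    by_cases hx : x ∈ O
    · simpa [hx] using ordAt_le_card V x
    · simpa [hx] using h x hx
  calc ∫ x, ordAt V x ∂μ ≤ ∫ x, O.indicator (fun _ => (V.card : ℝ)) x ∂μ :=
        integral_mono (integrable_ordAt μ hV) ((integrable_const _).indicator hO) hle
    _ = V.card * μ.real O := by rw [integral_indicator_const _ hO, smul_eq_mul, mul_comm]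

end OrdAt

section Capacity

variable {X Γ : Type*} [TopologicalSpace X] [MeasurableSpace X] (T : Γ → X ≃ₜ X)

def HasSmallBoundaryProperty : Prop :=
  ∀ U : Set X, IsOpen U → ∀ x ∈ U, ∃ V : Set X, IsOpen V ∧ x ∈ V ∧ V ⊆ U ∧
    cap T (frontier V) = 0

lemma cap_eq_zero_iff {A : Set X} : cap T A = 0 ↔ ∀ μ ∈ invProb T, (μ : Measure X) A = 0 := by
  simp only [cap, ENNReal.iSup_eq_zero]

lemma dimDyn_eq_zero_iff : dimDyn T = 0 ↔ ∀ U, IsOpenCover U → ∀ ε : ℝ, 0 < ε →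
    ∃ V, IsOpenCover V ∧ Refines U V ∧
      ∀ μ ∈ invProb T, ∫ x, ordAt V x ∂(μ : Measure X) ≤ ε := by
  simp only [dimDyn, ENNReal.iSup_eq_zero, mem_ofPred_eq]
  refine forall₂_congr fun U _ => ⟨fun h ε hε => ?_, fun h => ?_⟩
  · have hlt := ENNReal.ofReal_pos.2 hε
    rw [← h] at hlt
    simp only [iInf_lt_iff] at hlt
    obtain ⟨V, ⟨hV, hUV⟩, hVlt⟩ := hlt
    refine ⟨V, hV, hUV, fun μ hμ => (ENNReal.ofReal_le_ofReal_iff hε.le).1 ?_⟩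
    exact (le_iSup₂ (f := fun μ (_ : μ ∈ invProb T) =>
      ENNReal.ofReal (∫ x, ordAt V x ∂(μ : Measure X))) μ hμ).trans hVlt.le
  · refine le_antisymm (ENNReal.le_of_forall_pos_le_add fun ε hε _ => ?_) zero_le
    obtain ⟨V, hV, hUV, hint⟩ := h ε (by exact_mod_cast hε)
    rw [zero_add, ← ENNReal.ofReal_coe_nnreal]
    exact iInf₂_le_of_le V ⟨hV, hUV⟩ (iSup₂_le fun μ hμ => ENNReal.ofReal_le_ofReal (hint μ hμ))

end Capacity

lemma MeasureTheory.ProbabilityMeasure.isOpen_setOf_measure_lt {X : Type*} [TopologicalSpace X]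
    [MeasurableSpace X] [OpensMeasurableSpace X] [HasOuterApproxClosed X] {F : Set X}
    (hF : IsClosed F) (c : ℝ≥0∞) :
    IsOpen {μ : ProbabilityMeasure X | (μ : Measure X) F < c} :=
  isOpen_iff_mem_nhds.2 fun _ hμ => eventually_lt_of_limsup_lt
    ((ProbabilityMeasure.limsup_measure_closed_le_of_tendsto (μs := id) tendsto_id hF).trans_lt hμ)

lemma isClosed_invProb {X Γ : Type*} [TopologicalSpace X] [MeasurableSpace X] [BorelSpace X]
    [HasOuterApproxClosed X] (T : Γ → X ≃ₜ X) : IsClosed (invProb T) := by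
  have : invProb T = ⋂ γ, {μ | μ.map (T γ).continuous.measurable.aemeasurable = μ} := by
    ext μ
    simp [invProb, ← ProbabilityMeasure.toMeasure_injective.eq_iff]
  rw [this]
  exact isClosed_iInter fun γ =>
    isClosed_eq (ProbabilityMeasure.continuous_map (T γ).continuous) continuous_id

lemma exists_isOpen_superset_forall_measure_lt {X Γ : Type*} [MetricSpace X] [CompactSpace X]
    [MeasurableSpace X] [BorelSpace X] (T : Γ → X ≃ₜ X) {K : Set X} (hK : IsClosed K)
    (hK0 : ∀ μ ∈ invProb T, (μ : Measure X) K = 0) {ε : ℝ≥0∞} (hε : 0 < ε) :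
    ∃ O, IsOpen O ∧ K ⊆ O ∧ ∀ μ ∈ invProb T, (μ : Measure X) O < ε := by
  set δ : ℕ → ℝ := fun n => 1 / (n + 1)
  have hδ : Antitone δ := fun m n hmn => Nat.one_div_le_one_div hmn
  have hcover : invProb T ⊆
      ⋃ n, {μ : ProbabilityMeasure X | (μ : Measure X) (cthickening (δ n) K) < ε} := by
    intro μ hμ
    have hlim : Tendsto (fun n => (μ : Measure X) (cthickening (δ n) K))
        atTop (𝓝 0) := hK0 μ hμ ▸
      (tendsto_measure_cthickening_of_isClosed ⟨1, one_pos, measure_ne_top _ _⟩ hK).comp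
        tendsto_one_div_add_atTop_nhds_zero_nat
    obtain ⟨n, hn⟩ := (hlim.eventually (gt_mem_nhds hε)).exists
    exact mem_iUnion.2 ⟨n, hn⟩
  obtain ⟨N, hN⟩ := (isClosed_invProb T).isCompact.elim_directed_cover _
    (fun n => ProbabilityMeasure.isOpen_setOf_measure_lt isClosed_cthickening ε) hcover
    (Monotone.directed_le fun m n hmn μ hμ =>
      (measure_mono (cthickening_mono (hδ hmn) K)).trans_lt hμ)
  exact ⟨thickening (δ N) K, isOpen_thickening,
    self_subset_thickening (by positivity) K, fun μ hμ =>
      (measure_mono (thickening_subset_cthickening _ _)).trans_lt (hN hμ)⟩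

section Shrinking

variable {X : Type*} {E E' : ℕ → Set X}

lemma compl_iInter_subset_iInter (hcov : ∀ n, E n ∪ E' n = univ) (hE : Antitone E)
    (hE' : Antitone E') : (⋂ n, E' n)ᶜ ⊆ ⋂ n, E n := by
  intro y hy
  obtain ⟨m, hm⟩ := mem_iUnion.1 (compl_iInter E' ▸ hy)
  refine mem_iInter.2 fun n => ?_
  rcases le_total n m with hnm | hmn
  · exact hE hnm (((hcov m).symm ▸ mem_univ y).resolve_right hm)
  · exact ((hcov n).symm ▸ mem_univ y).resolve_right fun hn => hm (hE' hmn hn)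

variable [TopologicalSpace X]

lemma exists_pairwise_disjoint_isOpen_subset {ι : Type*} [LinearOrder ι] [Finite ι]
    {V : ι → Set X} (hV : ∀ i, IsOpen (V i)) (hcov : ⋃ i, V i = univ) :
    ∃ W : ι → Set X, (∀ i, IsOpen (W i)) ∧ (∀ i, W i ⊆ V i) ∧ Pairwise (Disjoint on W) ∧
      (⋃ i, W i)ᶜ ⊆ ⋃ i, frontier (V i) := by
  refine ⟨fun i => V i \ ⋃ j < i, closure (V j), fun i => (hV i).sdiff ?_, fun i => sdiff_subset,
    ?_, ?_⟩
  · exact isClosed_iUnion_of_finite fun j => isClosed_iUnion_of_finite fun _ => isClosed_closure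
  · refine (pairwise_disjoint_on _).2 fun i j hij => disjoint_left.2 fun x hxi hxj => ?_
    exact hxj.2 (mem_iUnion₂.2 ⟨i, hij, subset_closure hxi.1⟩)
  · intro y hy
    obtain ⟨i₀, hi₀⟩ := mem_iUnion.1 (hcov ▸ mem_univ y : y ∈ ⋃ i, V i)
    -- the first `V i` whose closure contains `y` has `y` on its frontier
    obtain ⟨i, hi, hmin⟩ := wellFounded_lt.has_min {i | y ∈ closure (V i)}
      ⟨i₀, subset_closure hi₀⟩
    refine mem_iUnion.2 ⟨i, (hV i).frontier_eq ▸ ⟨hi, fun hyi => hy (mem_iUnion.2 ⟨i, hyi, ?_⟩)⟩⟩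
    simp only [mem_iUnion, not_exists]
    exact fun j hji hj => hmin j hj hji

lemma exists_isOpen_closure_subset_of_union_eq_univ [NormalSpace X] {E E' : Set X}
    (hE : IsOpen E) (hE' : IsOpen E') (hcov : E ∪ E' = univ) :
    ∃ B B', IsOpen B ∧ IsOpen B' ∧ B ∪ B' = univ ∧ closure B ⊆ E ∧ closure B' ⊆ E' := by
  obtain ⟨B, hB, hE'B, hBE⟩ := normal_exists_closure_subset hE'.isClosed_compl hE
    (compl_subset_iff_union.2 (by rwa [union_comm]))
  obtain ⟨B', hB', hBB', hB'E'⟩ := normal_exists_closure_subset hB.isClosed_compl hE'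
    (compl_subset_comm.1 hE'B)
  exact ⟨B, B', hB, hB', compl_subset_iff_union.1 hBB', hBE, hB'E'⟩

lemma antitone_of_closure_succ_subset (hE : ∀ n, closure (E (n + 1)) ⊆ E n) : Antitone E :=
  antitone_nat_of_succ_le fun n => subset_closure.trans (hE n)

lemma isClosed_iInter_of_closure_succ_subset (hE : ∀ n, closure (E (n + 1)) ⊆ E n) :
    IsClosed (⋂ n, E n) := by
  have : ⋂ n, E n = ⋂ n, closure (E (n + 1)) := Subset.antisymm
    (subset_iInter fun n => (iInter_subset _ (n + 1)).trans subset_closure)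
    (subset_iInter fun n => (iInter_subset _ n).trans (hE n))
  rw [this]
  exact isClosed_iInter fun n => isClosed_closure

lemma frontier_compl_iInter_subset (hcov : ∀ n, E n ∪ E' n = univ)
    (hE : ∀ n, closure (E (n + 1)) ⊆ E n) (hE' : ∀ n, closure (E' (n + 1)) ⊆ E' n) (n : ℕ) :
    frontier (⋂ n, E' n)ᶜ ⊆ E n ∩ E' n := by
  rw [(isClosed_iInter_of_closure_succ_subset hE').isOpen_compl.frontier_eq]
  rintro y ⟨hy, hy'⟩
  have : y ∈ ⋂ n, E n := closure_minimal (compl_iInter_subset_iInter hcov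
    (antitone_of_closure_succ_subset hE) (antitone_of_closure_succ_subset hE'))
    (isClosed_iInter_of_closure_succ_subset hE) hy
  exact ⟨mem_iInter.1 this n, mem_iInter.1 (of_not_not hy') n⟩

end Shrinking

lemma exists_seq_of_forall_exists {α : Type*} {P : α → Prop} {r : ℕ → α → α → Prop} {a : α}
    (ha : P a) (h : ∀ n a, P a → ∃ b, P b ∧ r n a b) :
    ∃ f : ℕ → α, f 0 = a ∧ ∀ n, P (f n) ∧ r n (f n) (f (n + 1)) := by
  choose! g hg using h
  let f : ℕ → α := fun n => Nat.rec a (fun n b => g n b) n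
  have hP : ∀ n, P (f n) := fun n => Nat.rec ha (fun n ih => (hg n _ ih).1) n
  exact ⟨f, rfl, fun n => ⟨hP n, (hg n _ (hP n)).2⟩⟩

section SmallBoundaryOfDim

variable {X Γ : Type*} [TopologicalSpace X] [NormalSpace X] [MeasurableSpace X]
  [OpensMeasurableSpace X] (T : Γ → X ≃ₜ X)

lemma exists_shrink_forall_measure_inter_le (hdim : dimDyn T = 0) {E E' : Set X} (hE : IsOpen E)
    (hE' : IsOpen E') (hcov : E ∪ E' = univ) {ε : ℝ} (hε : 0 < ε) :
    ∃ F F', IsOpen F ∧ IsOpen F' ∧ F ∪ F' = univ ∧ closure F ⊆ E ∧ closure F' ⊆ E' ∧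
      ∀ μ ∈ invProb T, (μ : Measure X) (F ∩ F') ≤ ENNReal.ofReal ε := by
  obtain ⟨B, B', hB, hB', hBB', hBE, hB'E'⟩ :=
    exists_isOpen_closure_subset_of_union_eq_univ hE hE' hcov
  have hcovB : IsOpenCover ({B, B'} : Finset (Set X)) :=
    ⟨by simp [hB, hB'], by simpa using hBB'⟩
  obtain ⟨V, hV, hBV, hVint⟩ := (dimDyn_eq_zero_iff T).1 hdim _ hcovB ε hε
  -- members of `V` not lying in `B` lie in `B'`, so their closures lie in `E'`
  set F := ⋃ A ∈ V.filter (fun A => closure A ⊆ E), A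
  set F' := ⋃ A ∈ V.filter (fun A => ¬ closure A ⊆ E), A
  have hF : IsOpen F := isOpen_biUnion fun A hA => hV.1 A (Finset.mem_filter.1 hA).1
  have hF' : IsOpen F' := isOpen_biUnion fun A hA => hV.1 A (Finset.mem_filter.1 hA).1
  refine ⟨F, F', hF, hF', ?_, ?_, ?_, fun μ hμ => ?_⟩
  · refine eq_univ_of_forall fun y => ?_
    obtain ⟨A, hA, hyA⟩ : y ∈ ⋃₀ (V : Set (Set X)) := hV.2 ▸ mem_univ y
    by_cases hAE : closure A ⊆ E
    · exact Or.inl (mem_iUnion₂.2 ⟨A, Finset.mem_filter.2 ⟨hA, hAE⟩, hyA⟩)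
    · exact Or.inr (mem_iUnion₂.2 ⟨A, Finset.mem_filter.2 ⟨hA, hAE⟩, hyA⟩)
  · rw [Finset.closure_biUnion]
    exact iUnion₂_subset fun A hA => (Finset.mem_filter.1 hA).2
  · rw [Finset.closure_biUnion]
    refine iUnion₂_subset fun A hA => ?_
    obtain ⟨hAV, hAE⟩ := Finset.mem_filter.1 hA
    obtain ⟨C, hC, hAC⟩ := hBV A hAV
    rcases Finset.mem_insert.1 hC with rfl | hC
    · exact absurd ((closure_mono hAC).trans hBE) hAE
    · rw [Finset.mem_singleton.1 hC] at hAC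
      exact (closure_mono hAC).trans hB'E'
  · refine (measure_le_ofReal_integral_ordAt _ hV.2 (fun A hA => (hV.1 A hA).measurableSet)
      (hF.inter hF').measurableSet fun x ⟨hxF, hxF'⟩ => ?_).trans
      (ENNReal.ofReal_le_ofReal (hVint μ hμ))
    obtain ⟨A, hA, hxA⟩ := mem_iUnion₂.1 hxF
    obtain ⟨A', hA', hxA'⟩ := mem_iUnion₂.1 hxF'
    rw [Finset.mem_filter] at hA hA'
    exact one_le_ordAt hA.1 hA'.1 (fun h => hA'.2 (h ▸ hA.2)) hxA hxA'

lemma hasSmallBoundaryProperty_of_dimDyn_eq_zero [T1Space X] (hdim : dimDyn T = 0) :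
    HasSmallBoundaryProperty T := by
  intro U hU x hx
  obtain ⟨p, hp0, hp⟩ := exists_seq_of_forall_exists
    (P := fun p : Set X × Set X => IsOpen p.1 ∧ IsOpen p.2 ∧ p.1 ∪ p.2 = univ)
    (r := fun n p q => closure q.1 ⊆ p.1 ∧ closure q.2 ⊆ p.2 ∧
      ∀ μ ∈ invProb T, (μ : Measure X) (q.1 ∩ q.2) ≤ ENNReal.ofReal (1 / (n + 1)))
    (a := (U, {x}ᶜ)) ⟨hU, isOpen_compl_singleton, by simpa [← compl_subset_iff_union]⟩
    fun n p ⟨h1, h2, h3⟩ => by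
      obtain ⟨F, F', hF, hF', hcov, hFE, hF'E', hμ⟩ :=
        exists_shrink_forall_measure_inter_le T hdim h1 h2 h3 (ε := 1 / (n + 1)) (by positivity)
      exact ⟨(F, F'), ⟨hF, hF', hcov⟩, hFE, hF'E', hμ⟩
  have hcov : ∀ n, (p n).1 ∪ (p n).2 = univ := fun n => (hp n).1.2.2
  have hE : ∀ n, closure (p (n + 1)).1 ⊆ (p n).1 := fun n => (hp n).2.1
  have hE' : ∀ n, closure (p (n + 1)).2 ⊆ (p n).2 := fun n => (hp n).2.2.1
  refine ⟨(⋂ n, (p n).2)ᶜ, (isClosed_iInter_of_closure_succ_subset hE').isOpen_compl,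
    fun hxV => by simpa [hp0] using mem_iInter.1 hxV 0, ?_, (cap_eq_zero_iff T).2 fun μ hμ => ?_⟩
  · refine (compl_iInter_subset_iInter hcov (antitone_of_closure_succ_subset hE)
      (antitone_of_closure_succ_subset hE')).trans ((iInter_subset _ 0).trans ?_)
    simp [hp0]
  · have hlim : Tendsto (fun n : ℕ => ENNReal.ofReal (1 / (n + 1))) atTop (𝓝 0) := by
      simpa using ENNReal.tendsto_ofReal tendsto_one_div_add_atTop_nhds_zero_nat
    exact le_antisymm (ge_of_tendsto' hlim fun n => (measure_mono
      (frontier_compl_iInter_subset hcov hE hE' (n + 1))).trans ((hp n).2.2.2 μ hμ)) zero_le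

end SmallBoundaryOfDim

lemma exists_fin_cover_of_hasSmallBoundaryProperty {X Γ : Type*} [TopologicalSpace X]
    [CompactSpace X] [MeasurableSpace X] {T : Γ → X ≃ₜ X} (h : HasSmallBoundaryProperty T)
    {U : Finset (Set X)} (hU : IsOpenCover U) :
    ∃ (n : ℕ) (V : Fin n → Set X), (∀ i, IsOpen (V i)) ∧ ⋃ i, V i = univ ∧
      (∀ i, ∃ A ∈ U, V i ⊆ A) ∧ ∀ i, cap T (frontier (V i)) = 0 := by
  have hloc : ∀ x, ∃ V, IsOpen V ∧ x ∈ V ∧ (∃ A ∈ U, V ⊆ A) ∧ cap T (frontier V) = 0 := by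
    intro x
    obtain ⟨A, hA, hxA⟩ : x ∈ ⋃₀ (U : Set (Set X)) := hU.2 ▸ mem_univ x
    obtain ⟨V, hV, hxV, hVA, hcap⟩ := h A (hU.1 A hA) x hxA
    exact ⟨V, hV, hxV, ⟨A, hA, hVA⟩, hcap⟩
  choose v hv hxv hvU hvcap using hloc
  obtain ⟨t, ht⟩ := isCompact_univ.elim_finite_subcover v hv fun x _ => mem_iUnion.2 ⟨x, hxv x⟩
  refine ⟨t.card, fun i => v (t.equivFin.symm i), fun i => hv _,
    eq_univ_of_forall fun y => ?_, fun i => hvU _, fun i => hvcap _⟩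
  obtain ⟨x, hx, hyx⟩ := mem_iUnion₂.1 (ht (mem_univ y))
  exact mem_iUnion.2 ⟨t.equivFin ⟨x, hx⟩, by simpa using hyx⟩

section DimOfSmallBoundary

variable {X Γ : Type*} [MetricSpace X] [CompactSpace X] [MeasurableSpace X] [BorelSpace X]
  (T : Γ → X ≃ₜ X)

lemma exists_refinement_integral_ordAt_le {U : Finset (Set X)} (hU : IsOpenCover U) {n : ℕ}
    {V : Fin n → Set X} (hV : ∀ i, IsOpen (V i)) (hVcov : ⋃ i, V i = univ)
    (hVU : ∀ i, ∃ A ∈ U, V i ⊆ A) (hVcap : ∀ i, cap T (frontier (V i)) = 0) {ε : ℝ}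
    (hε : 0 < ε) : ∃ 𝒱, IsOpenCover 𝒱 ∧ Refines U 𝒱 ∧
      ∀ μ ∈ invProb T, ∫ x, ordAt 𝒱 x ∂(μ : Measure X) ≤ ε := by
  obtain ⟨W, hW, hWV, hWdisj, hWfr⟩ := exists_pairwise_disjoint_isOpen_subset hV hVcov
  have hK : IsClosed (⋃ i, W i)ᶜ := (isOpen_iUnion hW).isClosed_compl
  have hK0 : ∀ μ ∈ invProb T, (μ : Measure X) (⋃ i, W i)ᶜ = 0 := fun μ hμ =>
    measure_mono_null hWfr (measure_iUnion_null fun i => (cap_eq_zero_iff T).1 (hVcap i) μ hμ)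
  set c : ℝ := n + U.card + 1
  have hc : 0 < c := by positivity
  obtain ⟨O, hO, hKO, hOsmall⟩ := exists_isOpen_superset_forall_measure_lt T hK hK0
    (ENNReal.ofReal_pos.2 (div_pos hε hc))
  -- off `O` only the pairwise disjoint `W i` are present
  set 𝒱 := Finset.univ.image W ∪ U.image (· ∩ O)
  have hmem : ∀ B, B ∈ 𝒱 ↔ (∃ i, W i = B) ∨ ∃ A ∈ U, A ∩ O = B := by simp [𝒱]
  have h𝒱 : IsOpenCover 𝒱 := by
    refine ⟨fun B hB => ?_, eq_univ_of_forall fun y => ?_⟩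
    · rcases (hmem B).1 hB with ⟨i, rfl⟩ | ⟨A, hA, rfl⟩
      exacts [hW i, (hU.1 A hA).inter hO]
    · by_cases hy : y ∈ ⋃ i, W i
      · obtain ⟨i, hi⟩ := mem_iUnion.1 hy
        exact ⟨W i, (hmem _).2 (Or.inl ⟨i, rfl⟩), hi⟩
      · obtain ⟨A, hA, hyA⟩ : y ∈ ⋃₀ (U : Set (Set X)) := hU.2 ▸ mem_univ y
        exact ⟨A ∩ O, (hmem _).2 (Or.inr ⟨A, hA, rfl⟩), hyA, hKO hy⟩
  refine ⟨𝒱, h𝒱, fun B hB => ?_, fun μ hμ => ?_⟩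
  · rcases (hmem B).1 hB with ⟨i, rfl⟩ | ⟨A, hA, rfl⟩
    · obtain ⟨A, hA, hVA⟩ := hVU i
      exact ⟨A, hA, (hWV i).trans hVA⟩
    · exact ⟨A, hA, inter_subset_left⟩
  have hcard : (𝒱.card : ℝ) ≤ c := by
    have hW : (Finset.univ.image W).card ≤ n := Finset.card_image_le.trans (by simp)
    have hUO : (U.image (· ∩ O)).card ≤ U.card := Finset.card_image_le
    have : 𝒱.card ≤ n + U.card := (Finset.card_union_le _ _).trans (add_le_add hW hUO)
    simp only [c]
    exact_mod_cast this.trans (Nat.le_succ _)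
  have hoff : ∀ x ∉ O, ordAt 𝒱 x ≤ 0 := fun x hxO => ordAt_nonpos fun A hA B hB hxA hxB => by
    rcases (hmem A).1 hA with ⟨i, rfl⟩ | ⟨A, -, rfl⟩
    · rcases (hmem B).1 hB with ⟨j, rfl⟩ | ⟨B, -, rfl⟩
      · exact congrArg W (hWdisj.eq (not_disjoint_iff.2 ⟨x, hxA, hxB⟩))
      · exact absurd hxB.2 hxO
    · exact absurd hxA.2 hxO
  calc ∫ x, ordAt 𝒱 x ∂(μ : Measure X) ≤ 𝒱.card * (μ : Measure X).real O :=
        integral_ordAt_le_card_mul _ (fun B hB => (h𝒱.1 B hB).measurableSet) hO.measurableSet hoff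
    _ ≤ c * (ε / c) := mul_le_mul hcard
        (ENNReal.toReal_le_of_le_ofReal (div_pos hε hc).le (hOsmall μ hμ).le) measureReal_nonneg
        hc.le
    _ = ε := mul_div_cancel₀ ε hc.ne'

lemma dimDyn_eq_zero_of_hasSmallBoundaryProperty (h : HasSmallBoundaryProperty T) :
    dimDyn T = 0 := by
  refine (dimDyn_eq_zero_iff T).2 fun U hU ε hε => ?_
  obtain ⟨n, V, hV, hVcov, hVU, hVcap⟩ := exists_fin_cover_of_hasSmallBoundaryProperty h hU
  exact exists_refinement_integral_ordAt_le T hU hV hVcov hVU hVcap hε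

end DimOfSmallBoundary

theorem stmt9_general {X Γ : Type*} [MetricSpace X] [CompactSpace X] [MeasurableSpace X] [BorelSpace X]
    (T : Γ → X ≃ₜ X) :
    (∀ U : Set X, IsOpen U → ∀ x ∈ U, ∃ V : Set X, IsOpen V ∧ x ∈ V ∧ V ⊆ U ∧
        cap T (frontier V) = 0) ↔ dimDyn T = 0 :=
  ⟨dimDyn_eq_zero_of_hasSmallBoundaryProperty T, hasSmallBoundaryProperty_of_dimDyn_eq_zero T⟩

/-- A dynamical system has the small boundary property iff dim(X,T) = 0. -/
theorem stmt9 {X Γ : Type*} [MetricSpace X] [CompactSpace X] [MeasurableSpace X] [BorelSpace X]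
    [Group Γ] [Countable Γ] (T : Γ → X ≃ₜ X)
    (hT : ∀ γ γ' : Γ, ∀ x : X, T (γ * γ') x = T γ (T γ' x)) :
    (∀ U : Set X, IsOpen U → ∀ x ∈ U, ∃ V : Set X, IsOpen V ∧ x ∈ V ∧ V ⊆ U ∧
        cap T (frontier V) = 0) ↔ dimDyn T = 0 :=
  stmt9_general T
end

section
/- Let X be a compact metric space, d ∈ ℕ, and for every 1 ≤ j ≤ d and n ∈ ℕ let C_{j,n} be a finite collection of pairwise disjoint closed subsets of X with mesh(C_{j,n}) → 0 as n → ∞ for each j. For n ∈ ℕ let G_n be the set of f = (f_1,...,f_d) ∈ C(X,[0,1]^d) such that f_j separates C_{j,n} for all j (i.e. f_j(C) ∩ f_j(C') = ∅ for distinct C, C' ∈ C_{j,n}). Then G = ⋂_{N=1}^∞ ⋃_{n=N}^∞ G_n is a dense G_δ subset of C(X,[0,1]^d). -/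
open Metric Set



/-- Perturb finitely many values in `[0,1]` to make them distinct. -/
lemma exists_injOn_close {α : Type*} [DecidableEq α] {r : ℝ} (hr : 0 < r) (a : α → ℝ)
    (s : Finset α) (ha : ∀ i ∈ s, a i ∈ Set.Icc (0:ℝ) 1) :
    ∃ v : α → ℝ, Set.InjOn v s ∧ ∀ i ∈ s, v i ∈ Set.Icc (0:ℝ) 1 ∧ |v i - a i| ≤ r := by
  classical
  induction s using Finset.induction_on with
  | empty => exact ⟨a, by simp, by simp⟩
  | @insert i s hi ih =>
    obtain ⟨v, hvinj, hv⟩ := ih (fun j hj => ha j (Finset.mem_insert_of_mem hj))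
    obtain ⟨h0, h1⟩ := ha i (Finset.mem_insert_self i s)
    have hlt : max 0 (a i - r) < min 1 (a i + r) := by
      apply max_lt
      · exact lt_min (by linarith) (by linarith)
      · exact lt_min (by linarith) (by linarith)
    have hinf : (Set.Icc (max 0 (a i - r)) (min 1 (a i + r)) \ (v '' s)).Infinite :=
      (Set.Icc_infinite hlt).diff (s.finite_toSet.image v)
    obtain ⟨w, hwI, hwim⟩ := hinf.nonempty
    refine ⟨Function.update v i w, ?_, ?_⟩
    · intro x hx y hy hxy
      simp only [Finset.coe_insert, Set.mem_insert_iff, Finset.mem_coe] at hx hy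
      rcases hx with rfl | hx <;> rcases hy with rfl | hy
      · rfl
      · rw [Function.update_self, Function.update_of_ne (by rintro rfl; exact hi hy)] at hxy
        exact absurd ⟨y, hy, hxy.symm⟩ hwim
      · rw [Function.update_self, Function.update_of_ne (by rintro rfl; exact hi hx)] at hxy
        exact absurd ⟨x, hx, hxy⟩ hwim
      · rw [Function.update_of_ne (by rintro rfl; exact hi hx),
          Function.update_of_ne (by rintro rfl; exact hi hy)] at hxy
        exact hvinj hx hy hxy
    · intro k hk
      rcases Finset.mem_insert.mp hk with rfl | hks
      · rw [Function.update_self]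
        obtain ⟨hw1, hw2⟩ := hwI
        have e1 : (0:ℝ) ≤ max 0 (a k - r) := le_max_left _ _
        have e2 : a k - r ≤ max 0 (a k - r) := le_max_right _ _
        have e3 : min 1 (a k + r) ≤ 1 := min_le_left _ _
        have e4 : min 1 (a k + r) ≤ a k + r := min_le_right _ _
        exact ⟨⟨by linarith, by linarith⟩, abs_le.mpr ⟨by linarith, by linarith⟩⟩
      · rw [Function.update_of_ne (by rintro rfl; exact hi hks)]
        exact hv k hks

/-- Disjoint open neighborhoods of finitely many pairwise disjoint closed sets,
refining given open neighborhoods. -/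
lemma exists_disjoint_opens {X : Type*} [TopologicalSpace X] [NormalSpace X]
    (s : Finset (Set X)) (hclosed : ∀ C ∈ s, IsClosed C)
    (hdisj : ∀ C ∈ s, ∀ C' ∈ s, C ≠ C' → Disjoint C C')
    (W : Set X → Set X) (hW : ∀ C ∈ s, IsOpen (W C) ∧ C ⊆ W C) :
    ∃ U : Set X → Set X, (∀ C ∈ s, IsOpen (U C) ∧ C ⊆ U C ∧ U C ⊆ W C) ∧
      ∀ C ∈ s, ∀ C' ∈ s, C ≠ C' → Disjoint (U C) (U C') := by
  classical
  have key : ∀ C C' : Set X, ∃ AB : Set X × Set X, C ∈ s → C' ∈ s → C ≠ C' →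
      IsOpen AB.1 ∧ IsOpen AB.2 ∧ C ⊆ AB.1 ∧ C' ⊆ AB.2 ∧ Disjoint AB.1 AB.2 := by
    intro C C'
    by_cases h : C ∈ s ∧ C' ∈ s ∧ C ≠ C'
    · obtain ⟨h1, h2, h3⟩ := h
      obtain ⟨A, B, hA, hB, hCA, hCB, hAB⟩ :=
        NormalSpace.normal C C' (hclosed C h1) (hclosed C' h2) (hdisj C h1 C' h2 h3)
      exact ⟨(A, B), fun _ _ _ => ⟨hA, hB, hCA, hCB, hAB⟩⟩
    · exact ⟨(∅, ∅), fun h1 h2 h3 => absurd ⟨h1, h2, h3⟩ h⟩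
  choose AB hAB using key
  refine ⟨fun C => W C ∩ ⋂ C' ∈ s.erase C, ((AB C C').1 ∩ (AB C' C).2), ?_, ?_⟩
  · intro C hC
    have hsub : C ⊆ ⋂ C' ∈ s.erase C, ((AB C C').1 ∩ (AB C' C).2) := by
      refine Set.subset_iInter₂ fun C' hC' => ?_
      have hC's := Finset.mem_of_mem_erase hC'
      have hne : C ≠ C' := Ne.symm (Finset.ne_of_mem_erase hC')
      exact Set.subset_inter (hAB C C' hC hC's hne).2.2.1
        (hAB C' C hC's hC hne.symm).2.2.2.1
    refine ⟨(hW C hC).1.inter (isOpen_biInter_finset fun C' hC' => ?_),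
      Set.subset_inter (hW C hC).2 hsub, Set.inter_subset_left⟩
    have hC's := Finset.mem_of_mem_erase hC'
    have hne : C ≠ C' := Ne.symm (Finset.ne_of_mem_erase hC')
    exact ((hAB C C' hC hC's hne).1).inter ((hAB C' C hC's hC hne.symm).2.1)
  · intro C hC C' hC' hne
    have h1 : (W C ∩ ⋂ D ∈ s.erase C, ((AB C D).1 ∩ (AB D C).2)) ⊆ (AB C C').1 := by
      refine Set.inter_subset_right.trans ?_
      refine (Set.biInter_subset_of_mem (Finset.mem_erase.mpr ⟨hne.symm, hC'⟩)).trans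
        Set.inter_subset_left
    have h2 : (W C' ∩ ⋂ D ∈ s.erase C', ((AB C' D).1 ∩ (AB D C').2)) ⊆ (AB C C').2 := by
      refine Set.inter_subset_right.trans ?_
      refine (Set.biInter_subset_of_mem (Finset.mem_erase.mpr ⟨hne, hC⟩)).trans
        Set.inter_subset_right
    exact ((hAB C C' hC hC' hne).2.2.2.2).mono h1 h2


lemma open_sep {X : Type*} [MetricSpace X] [CompactSpace X] {d : ℕ} (j : Fin d) {C C' : Set X}
    (hC : IsCompact C) (hC' : IsCompact C') :
    IsOpen {f : C(X, Fin d → unitInterval) |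
      Disjoint ((fun x => f x j) '' C) ((fun x => f x j) '' C')} := by
  rw [Metric.isOpen_iff]
  intro f hf
  rcases C.eq_empty_or_nonempty with rfl | hCne
  · exact ⟨1, one_pos, fun g _ => by simp⟩
  rcases C'.eq_empty_or_nonempty with rfl | hC'ne
  · exact ⟨1, one_pos, fun g _ => by simp⟩
  have hcont : Continuous fun p : X × X => dist (f p.1 j) (f p.2 j) := by fun_prop
  obtain ⟨p, hp, hmin⟩ := (hC.prod hC').exists_isMinOn (hCne.prod hC'ne) hcont.continuousOn
  have hε : 0 < dist (f p.1 j) (f p.2 j) := by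
    rw [dist_pos]
    intro he
    exact Set.disjoint_left.mp hf ⟨p.1, hp.1, rfl⟩ ⟨p.2, hp.2, he.symm⟩
  set ε := dist (f p.1 j) (f p.2 j) with hεdef
  refine ⟨ε / 2, half_pos hε, fun g hg => ?_⟩
  rw [Metric.mem_ball] at hg
  rw [Set.mem_setOf_eq, Set.disjoint_left]
  rintro z ⟨x, hx, rfl⟩ ⟨y, hy, hzy⟩
  have h1 : dist (g x j) (f x j) ≤ dist g f :=
    le_trans (dist_le_pi_dist _ _ j) (ContinuousMap.dist_apply_le_dist x)
  have h2 : dist (g y j) (f y j) ≤ dist g f :=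
    le_trans (dist_le_pi_dist _ _ j) (ContinuousMap.dist_apply_le_dist y)
  have h3 : ε ≤ dist (f x j) (f y j) := hmin (Set.mk_mem_prod hx hy)
  have h4 := dist_triangle4 (f x j) (g x j) (g y j) (f y j)
  have h5 : dist (g x j) (g y j) = 0 := by rw [show g x j = g y j from hzy.symm, dist_self]
  rw [dist_comm (f x j) (g x j)] at h4
  linarith

lemma coord_step {X : Type*} [MetricSpace X] [CompactSpace X]
    (s : Finset (Set X)) (hclosed : ∀ C ∈ s, IsClosed C)
    (hdisj : ∀ C ∈ s, ∀ C' ∈ s, C ≠ C' → Disjoint C C')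
    (F : X → ℝ) (hFc : Continuous F) (hF01 : ∀ x, F x ∈ Set.Icc (0:ℝ) 1)
    (ε : ℝ) (hε : 0 < ε)
    (hdiam : ∀ C ∈ s, ∀ x ∈ C, ∀ y ∈ C, dist (F x) (F y) < ε / 8) :
    ∃ G : X → ℝ, Continuous G ∧ (∀ x, G x ∈ Set.Icc (0:ℝ) 1) ∧
      (∀ x, |G x - F x| ≤ ε / 4) ∧
      ∃ v : Set X → ℝ,
        (∀ C ∈ s, ∀ C' ∈ s, C.Nonempty → C'.Nonempty → v C = v C' → C = C') ∧
        ∀ C ∈ s, ∀ x ∈ C, G x = v C := by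
  classical
  set s' : Finset (Set X) := s.filter (fun C => C.Nonempty) with hs'
  have hs'mem : ∀ {C}, C ∈ s' ↔ C ∈ s ∧ C.Nonempty := by
    intro C; simp [hs', Finset.mem_filter]
  set a : Set X → ℝ := fun C => if h : C.Nonempty then F h.some else 0 with ha_def
  have ha : ∀ C ∈ s', a C ∈ Set.Icc (0:ℝ) 1 := by
    intro C hC
    obtain ⟨-, hne⟩ := hs'mem.mp hC
    simp only [ha_def, dif_pos hne]
    exact hF01 _
  obtain ⟨v, hvinj, hv⟩ := exists_injOn_close (by linarith : (0:ℝ) < ε/8) a s' ha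
  set W : Set X → Set X := fun C => {x | dist (F x) (a C) < ε/8} with hW_def
  have hW : ∀ C ∈ s', IsOpen (W C) ∧ C ⊆ W C := by
    intro C hC
    obtain ⟨hCs, hne⟩ := hs'mem.mp hC
    constructor
    · exact isOpen_lt (hFc.dist continuous_const) continuous_const
    · intro x hx
      show dist (F x) (a C) < ε/8
      rw [ha_def]
      simp only [dif_pos hne]
      exact hdiam C hCs x hx hne.some hne.some_mem
  obtain ⟨U, hU1, hU2⟩ := exists_disjoint_opens s'
    (fun C hC => hclosed C (hs'mem.mp hC).1)
    (fun C hC C' hC' hne => hdisj C (hs'mem.mp hC).1 C' (hs'mem.mp hC').1 hne) W hW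
  have hury : ∀ C, ∃ φ : C(X, ℝ), C ∈ s' →
      (Set.EqOn φ 0 (U C)ᶜ ∧ Set.EqOn φ 1 C ∧ ∀ x, φ x ∈ Set.Icc (0:ℝ) 1) := by
    intro C
    by_cases hC : C ∈ s'
    · obtain ⟨φ, h0, h1, h01⟩ := exists_continuous_zero_one_of_isClosed
        (isClosed_compl_iff.mpr (hU1 C hC).1) (hclosed C (hs'mem.mp hC).1)
        (Set.disjoint_left.mpr fun x hxc hxC => hxc ((hU1 C hC).2.1 hxC))
      exact ⟨φ, fun _ => ⟨h0, h1, h01⟩⟩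
    · exact ⟨0, fun h => absurd h hC⟩
  choose φ hφ using hury
  set G : X → ℝ := fun x => F x + ∑ C ∈ s', φ C x * (v C - F x) with hG_def
  have hGc : Continuous G := by
    apply hFc.add
    exact continuous_finset_sum _ fun C _ => ((φ C).continuous.mul (continuous_const.sub hFc))
  -- key pointwise dichotomy
  have key : ∀ x, G x = F x ∨ ∃ C ∈ s', x ∈ U C ∧ G x = F x + φ C x * (v C - F x) := by
    intro x
    set T := s'.filter (fun C => φ C x ≠ 0) with hT
    have hsum : ∑ C ∈ s', φ C x * (v C - F x) = ∑ C ∈ T, φ C x * (v C - F x) := by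
      rw [hT]
      exact (Finset.sum_filter_of_ne (p := fun C => φ C x ≠ 0)
        (fun C _ h => fun h0 => h (by rw [h0, zero_mul]))).symm
    have hmemU : ∀ C ∈ T, x ∈ U C := by
      intro C hC
      obtain ⟨hCs', hφne⟩ := Finset.mem_filter.mp hC
      by_contra hx
      exact hφne (by simpa using (hφ C hCs').1 hx)
    rcases T.eq_empty_or_nonempty with hTe | ⟨C, hCT⟩
    · left; rw [hG_def]; simp [hsum, hTe]
    · right
      have hCs' := (Finset.mem_filter.mp hCT).1
      have hTsing : T = {C} := by
        refine Finset.eq_singleton_iff_unique_mem.mpr ⟨hCT, fun C' hC' => ?_⟩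
        by_contra hne
        exact Set.disjoint_left.mp
          (hU2 C' (Finset.mem_filter.mp hC').1 C hCs' hne)
          (hmemU C' hC') (hmemU C hCT)
      exact ⟨C, hCs', hmemU C hCT, by rw [hG_def]; simp [hsum, hTsing]⟩
  refine ⟨G, hGc, ?_, ?_, v, ?_, ?_⟩
  · intro x
    rcases key x with h | ⟨C, hC, hxU, h⟩
    · rw [h]; exact hF01 x
    · obtain ⟨ht0, ht1⟩ := (hφ C hC).2.2 x
      obtain ⟨hv0, hv1⟩ := (hv C hC).1
      obtain ⟨hf0, hf1⟩ := hF01 x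
      rw [h]
      constructor <;> nlinarith
  · intro x
    rcases key x with h | ⟨C, hC, hxU, h⟩
    · rw [h]; simpa using by positivity
    · have hxW : x ∈ W C := (hU1 C hC).2.2 hxU
      have hd1 : dist (F x) (a C) < ε/8 := hxW
      have hd2 : |v C - a C| ≤ ε/8 := (hv C hC).2
      obtain ⟨ht0, ht1⟩ := (hφ C hC).2.2 x
      have e0 : G x - F x = φ C x * (v C - F x) := by rw [h]; ring
      have e1 : |G x - F x| = |φ C x| * |v C - F x| := by rw [e0, abs_mul]
      have e2 : |v C - F x| ≤ |v C - a C| + |a C - F x| := abs_sub_le _ _ _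
      have e3 : |a C - F x| = dist (F x) (a C) := by
        rw [Real.dist_eq, abs_sub_comm]
      have e4 : |φ C x| ≤ 1 := by rw [abs_of_nonneg ht0]; exact ht1
      have e5 : |φ C x| * |v C - F x| ≤ |v C - F x| := by
        nlinarith [abs_nonneg (v C - F x)]
      linarith
  · intro C hC C' hC' hne hne' hvv
    exact hvinj (by simpa [Finset.coe_filter] using hs'mem.mpr ⟨hC, hne⟩)
      (by simpa [Finset.coe_filter] using hs'mem.mpr ⟨hC', hne'⟩) hvv
  · intro C hC x hx
    have hCs' : C ∈ s' := hs'mem.mpr ⟨hC, ⟨x, hx⟩⟩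
    have hφ1 : φ C x = 1 := by simpa using (hφ C hCs').2.1 hx
    have hsum : ∑ D ∈ s', φ D x * (v D - F x) = φ C x * (v C - F x) := by
      refine Finset.sum_eq_single_of_mem C hCs' fun D hD hDne => ?_
      have hUx : x ∉ U D := by
        intro hxU
        exact Set.disjoint_left.mp (hU2 D hD C hCs' hDne) hxU ((hU1 C hCs').2.1 hx)
      have : φ D x = 0 := by simpa using (hφ D hD).1 hUx
      rw [this, zero_mul]
    rw [hG_def]
    simp only [hsum, hφ1]
    ring


set_option maxHeartbeats 1000000
set_option synthInstance.maxHeartbeats 1000000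

/-- Baire category lemma: given, for each 1 ≤ j ≤ d and n ∈ ℕ, a finite collection 𝒞 j n of
pairwise disjoint closed subsets of X with mesh tending to 0, the set of maps
f ∈ C(X,[0,1]^d) whose j-th coordinate separates 𝒞 j n for infinitely many n
is a dense G_δ subset of C(X,[0,1]^d). -/
theorem stmt10 {X : Type*} [MetricSpace X] [CompactSpace X] (d : ℕ)
    (𝒞 : Fin d → ℕ → Finset (Set X))
    (hclosed : ∀ j n, ∀ C ∈ 𝒞 j n, IsClosed C)
    (hdisj : ∀ j n, ∀ C ∈ 𝒞 j n, ∀ C' ∈ 𝒞 j n, C ≠ C' → Disjoint C C')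
    (hmesh : ∀ j : Fin d, ∀ ε > (0:ℝ), ∃ N : ℕ, ∀ n ≥ N, ∀ C ∈ 𝒞 j n, Metric.diam C ≤ ε)
    (G : ℕ → Set C(X, Fin d → unitInterval))
    (hG : ∀ n, G n = {f : C(X, Fin d → unitInterval) |
      ∀ j : Fin d, ∀ C ∈ 𝒞 j n, ∀ C' ∈ 𝒞 j n, C ≠ C' →
        Disjoint ((fun x => f x j) '' C) ((fun x => f x j) '' C')}) :
    IsGδ (⋂ N : ℕ, ⋃ n : ℕ, ⋃ _ : N ≤ n, G n) ∧
      Dense (⋂ N : ℕ, ⋃ n : ℕ, ⋃ _ : N ≤ n, G n) := by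
  classical
  have hGopen : ∀ n, IsOpen (G n) := by
    intro n
    rw [hG n]
    have heq : {f : C(X, Fin d → unitInterval) |
        ∀ j : Fin d, ∀ C ∈ 𝒞 j n, ∀ C' ∈ 𝒞 j n, C ≠ C' →
          Disjoint ((fun x => f x j) '' C) ((fun x => f x j) '' C')}
        = ⋂ j : Fin d, ⋂ C ∈ 𝒞 j n, ⋂ C' ∈ 𝒞 j n,
            {f : C(X, Fin d → unitInterval) | C ≠ C' →
              Disjoint ((fun x => f x j) '' C) ((fun x => f x j) '' C')} := by
      ext f
      simp only [Set.mem_setOf_eq, Set.mem_iInter]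
    rw [heq]
    refine isOpen_iInter_of_finite fun j => ?_
    refine isOpen_biInter_finset fun C hC => ?_
    refine isOpen_biInter_finset fun C' hC' => ?_
    by_cases hne : C ≠ C'
    · have h1 : {f : C(X, Fin d → unitInterval) | C ≠ C' →
          Disjoint ((fun x => f x j) '' C) ((fun x => f x j) '' C')}
          = {f : C(X, Fin d → unitInterval) |
              Disjoint ((fun x => f x j) '' C) ((fun x => f x j) '' C')} := by
        ext f; simp [hne]
      rw [h1]
      exact open_sep j (hclosed j n C hC).isCompact (hclosed j n C' hC').isCompact
    · have h1 : {f : C(X, Fin d → unitInterval) | C ≠ C' →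
          Disjoint ((fun x => f x j) '' C) ((fun x => f x j) '' C')} = Set.univ := by
        ext f; simp [hne]
      rw [h1]
      exact isOpen_univ
  have hdense : ∀ N, Dense (⋃ n, ⋃ _ : N ≤ n, G n) := by
    intro N
    rw [Metric.dense_iff]
    intro f ε hε
    obtain ⟨δ, hδ, hδ'⟩ := Metric.uniformContinuous_iff.mp
      (CompactSpace.uniformContinuous_of_continuous f.continuous) (ε/8) (by linarith)
    choose M hMle using fun j : Fin d => hmesh j (δ/2) (by linarith)
    set n := N + Finset.univ.sup M with hn
    have hnN : N ≤ n := Nat.le_add_right _ _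
    have hnM : ∀ j, M j ≤ n :=
      fun j => le_trans (Finset.le_sup (Finset.mem_univ j)) (Nat.le_add_left _ _)
    have hdiam : ∀ j : Fin d, ∀ C ∈ 𝒞 j n, ∀ x ∈ C, ∀ y ∈ C,
        dist ((f x j : ℝ)) ((f y j : ℝ)) < ε/8 := by
      intro j C hC x hx y hy
      have hb : Bornology.IsBounded C := (hclosed j n C hC).isCompact.isBounded
      have h1 : dist x y < δ :=
        lt_of_le_of_lt (le_trans (Metric.dist_le_diam_of_mem hb hx hy)
          (hMle j n (hnM j) C hC)) (by linarith)
      have h2 : dist (f x j) (f y j) ≤ dist (f x) (f y) := dist_le_pi_dist _ _ j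
      have h3 : dist ((f x j : ℝ)) ((f y j : ℝ)) = dist (f x j) (f y j) :=
        (Subtype.dist_eq _ _).symm
      rw [h3]
      exact lt_of_le_of_lt h2 (hδ' h1)
    have hcoord : ∀ j : Fin d, ∃ Gj : X → ℝ, Continuous Gj ∧
        (∀ x, Gj x ∈ Set.Icc (0:ℝ) 1) ∧ (∀ x, |Gj x - ((f x j : ℝ))| ≤ ε/4) ∧
        ∃ v : Set X → ℝ,
          (∀ C ∈ 𝒞 j n, ∀ C' ∈ 𝒞 j n, C.Nonempty → C'.Nonempty → v C = v C' → C = C') ∧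
          ∀ C ∈ 𝒞 j n, ∀ x ∈ C, Gj x = v C := by
      intro j
      exact coord_step (𝒞 j n) (hclosed j n) (hdisj j n) (fun x => ((f x j : ℝ)))
        (by fun_prop) (fun x => (f x j).2) ε hε (hdiam j)
    choose Gf hGc hG01 hGclose v hvinj hvconst using hcoord
    set g : C(X, Fin d → unitInterval) :=
      ⟨fun x j => ⟨Gf j x, hG01 j x⟩, by
        refine continuous_pi fun j => ?_
        exact Continuous.subtype_mk (hGc j) _⟩ with hg
    refine ⟨g, ?_, ?_⟩
    · rw [Metric.mem_ball]
      have hle : dist g f ≤ ε/4 := by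
        rw [ContinuousMap.dist_le (by linarith)]
        intro x
        rw [dist_pi_le_iff (by linarith)]
        intro j
        rw [Subtype.dist_eq, Real.dist_eq]
        exact hGclose j x
      linarith
    · rw [Set.mem_iUnion]
      refine ⟨n, Set.mem_iUnion.mpr ⟨hnN, ?_⟩⟩
      rw [hG n]
      intro j C hC C' hC' hne
      rw [Set.disjoint_left]
      rintro z ⟨x, hx, rfl⟩ ⟨y, hy, hzy⟩
      have h3 : Gf j y = Gf j x := congrArg Subtype.val hzy
      have h4 : v j C' = v j C := by
        rw [← hvconst j C hC x hx, ← hvconst j C' hC' y hy, h3]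
      exact hne (hvinj j C' hC' C hC ⟨y, hy⟩ ⟨x, hx⟩ h4).symm
  have hopen : ∀ N : ℕ, IsOpen (⋃ n, ⋃ _ : N ≤ n, G n) :=
    fun N => isOpen_iUnion fun n => isOpen_iUnion fun _ => hGopen n
  exact ⟨IsGδ.iInter fun N => (hopen N).isGδ,
    dense_iInter_of_isOpen hopen hdense⟩
end

section
/- Let (X,T) and (Y,S) be Γ-dynamical systems and f : X → Y a continuous equivariant map. Then f is an almost embedding (i.e. for every invariant μ ∈ Prob(X,T), f induces a measure-theoretic isomorphism between (X,T,μ) and (Y,S,f_*μ)) if and only if every (T×T)-invariant Borel probability measure on the fiber product X ×_f X = {(x_1,x_2) ∈ X×X : f(x_1)=f(x_2)} is supported on the diagonal Δ_X = {(x,x) : x ∈ X}. -/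
open MeasureTheory Set

/-!
If `f` is injective on a set of full measure for the invariant measure `(λ₁ + λ₂) / 2` built
from the marginals of an invariant `λ` carried by the fiber product, then `λ`-almost every pair
has both coordinates in that set and equal images, hence lies on the diagonal.

Conversely, disintegrate an invariant `μ` over `f` by `κ = condDistrib id f μ`. Uniqueness of
disintegration makes `κ` equivariant, so the relatively independent self-joining
`∫ κ_y ⊗ κ_y d(f_* μ)` is invariant and carried by the fiber product. If it is carried by the
diagonal, almost every `κ_y` is a point mass, and `f` is injective on the full-measure set
`{x | κ_{f x} {x} = 1}`.
-/

open ProbabilityTheory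
open scoped ENNReal

namespace MeasureTheory.Measure

variable {α β : Type*} [MeasurableSpace α] [MeasurableSpace β]

lemma map_map_eq_of_semiconj {μ : Measure α} {f : α → β} {T : α → α} {S : β → β}
    (hf : Measurable f) (hT : Measurable T) (hS : Measurable S) (hμT : μ.map T = μ)
    (hfT : Function.Semiconj f T S) : (μ.map f).map S = μ.map f := by
  rw [Measure.map_map hS hf, ← hfT.comp_eq, ← Measure.map_map hf hT, hμT]

lemma fst_add_snd_map_eq_of_map_prodMap_eq {ρ : Measure (α × α)} {g : α → α}
    (hg : Measurable g) (hρ : ρ.map (Prod.map g g) = ρ) :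
    (ρ.fst + ρ.snd).map g = ρ.fst + ρ.snd := by
  have hfst : ρ.fst.map g = ρ.fst := by
    conv_rhs => rw [← hρ]
    rw [Measure.fst, Measure.fst, Measure.map_map hg measurable_fst,
      Measure.map_map measurable_fst (hg.prodMap hg)]
    rfl
  have hsnd : ρ.snd.map g = ρ.snd := by
    conv_rhs => rw [← hρ]
    rw [Measure.snd, Measure.snd, Measure.map_map hg measurable_snd,
      Measure.map_map measurable_snd (hg.prodMap hg)]
    rfl
  rw [Measure.map_add _ _ hg, hfst, hsnd]

lemma comap_comp_eq_comp_map {γ : Type*} [MeasurableSpace γ] (κ : Kernel α β) (μ : Measure γ)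
    {g : γ → α} (hg : Measurable g) : κ.comap g hg ∘ₘ μ = κ ∘ₘ μ.map g := by
  rw [← Kernel.comp_deterministic_eq_comap, ← Measure.comp_assoc,
    Measure.deterministic_comp_eq_map]

lemma eq_of_apply_singleton_eq_one {μ : Measure α} [IsProbabilityMeasure μ]
    [MeasurableSingletonClass α] {a b : α} (ha : μ {a} = 1) (hb : μ {b} = 1) : a = b := by
  by_contra hab
  have hnull : μ {a}ᶜ = 0 := (prob_compl_eq_zero_iff (measurableSet_singleton a)).2 ha
  have : μ {b} = 0 := measure_mono_null (by simpa [eq_comm] using hab) hnull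
  simp [this] at hb

lemma ae_apply_singleton_eq_one_of_ae_prod_eq {μ : Measure α} [IsProbabilityMeasure μ]
    [MeasurableSingletonClass α] (h : ∀ᵐ p ∂μ.prod μ, p.1 = p.2) :
    ∀ᵐ a ∂μ, μ {a} = 1 := by
  filter_upwards [Measure.ae_ae_of_ae_prod h] with a ha
  rw [ae_iff] at ha
  rw [← prob_compl_eq_zero_iff (measurableSet_singleton a), ← ha]
  congr 1
  ext; simp [eq_comm]

end MeasureTheory.Measure

namespace ProbabilityTheory.Kernel

variable {α : Type*} [MeasurableSpace α] [MeasurableEq α]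

lemma measurable_apply_singleton_self (κ : Kernel α α) [IsSFiniteKernel κ] :
    Measurable fun a => κ a {a} := by
  have h := measurable_kernel_prodMk_left (κ := κ) (measurableSet_diagonal (α := α))
  have hsing : ∀ a : α, Prod.mk a ⁻¹' diagonal α = {a} := fun a => by ext; simp [eq_comm]
  simpa only [hsing] using h

end ProbabilityTheory.Kernel

section AlmostEmbedding

variable {X Y : Type*} [MeasurableSpace X] {f : X → Y}

lemma ae_fst_eq_snd_of_injOn {ρ : Measure (X × X)} {B : Set X} (hB : InjOn f B)
    (hρB : ∀ᵐ x ∂(ρ.fst + ρ.snd), x ∈ B) (hfib : ∀ᵐ p ∂ρ, f p.1 = f p.2) :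
    ∀ᵐ p ∂ρ, p.1 = p.2 := by
  rw [ae_add_measure_iff] at hρB
  filter_upwards [ae_of_ae_map measurable_fst.aemeasurable hρB.1,
    ae_of_ae_map measurable_snd.aemeasurable hρB.2, hfib] with p h1 h2 h
  exact hB h1 h2 h

theorem ae_eq_of_forall_invariant_exists_injOn {ι : Type*} {T : ι → X → X}
    (hT : ∀ i, Measurable (T i))
    (hemb : ∀ μ : Measure X, IsProbabilityMeasure μ → (∀ i, μ.map (T i) = μ) →
      ∃ B, MeasurableSet B ∧ μ B = 1 ∧ InjOn f B)
    (ρ : Measure (X × X)) [IsProbabilityMeasure ρ]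
    (hρ : ∀ i, ρ.map (Prod.map (T i) (T i)) = ρ) (hfib : ∀ᵐ p ∂ρ, f p.1 = f p.2) :
    ∀ᵐ p ∂ρ, p.1 = p.2 := by
  set m : Measure X := (2 : ℝ≥0∞)⁻¹ • (ρ.fst + ρ.snd)
  have hm : IsProbabilityMeasure m := ⟨by simp [m, ENNReal.inv_two_add_inv_two]⟩
  obtain ⟨B, hBm, hB1, hBinj⟩ := hemb m hm fun i => by
    rw [Measure.map_smul, Measure.fst_add_snd_map_eq_of_map_prodMap_eq (hT i) (hρ i)]
  refine ae_fst_eq_snd_of_injOn hBinj ?_ hfib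
  rw [← Measure.ae_ennreal_smul_measure_eq (c := (2 : ℝ≥0∞)⁻¹) (by simp)]
  exact (mem_ae_iff_prob_eq_one hBm).2 hB1

end AlmostEmbedding

section RelativelyIndependentJoining

variable {X Y : Type*} [MeasurableSpace X] [StandardBorelSpace X] [Nonempty X]
  [MeasurableSpace Y]

noncomputable def relIndepSelfJoining (μ : Measure X) [IsFiniteMeasure μ] (f : X → Y) :
    Measure (X × X) :=
  (condDistrib id f μ ×ₖ condDistrib id f μ) ∘ₘ μ.map f

variable (μ : Measure X) [IsProbabilityMeasure μ] {f : X → Y}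

lemma isProbabilityMeasure_relIndepSelfJoining (hf : Measurable f) :
    IsProbabilityMeasure (relIndepSelfJoining μ f) := by
  have := Measure.isProbabilityMeasure_map (μ := μ) hf.aemeasurable
  unfold relIndepSelfJoining
  infer_instance

lemma condDistrib_map_ae_eq_comap (hf : Measurable f) {T : X → X} (hT : Measurable T)
    (hμT : μ.map T = μ) (S : Y ≃ᵐ Y) (hfT : Function.Semiconj f T S) :
    (condDistrib id f μ).map T =ᵐ[μ.map f] (condDistrib id f μ).comap S S.measurable := by
  set κ := condDistrib id f μ
  -- Both `κ.map T` and `κ.comap S` are conditional distributions of `T` given `f`.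
  have hκ : HasCondDistrib id f κ μ :=
    ⟨by fun_prop, (compProd_map_condDistrib aemeasurable_id).symm⟩
  have hSf : μ.map (S ∘ f) = μ.map f := by
    rw [← Measure.map_map S.measurable hf,
      Measure.map_map_eq_of_semiconj hf hT S.measurable hμT hfT]
  have hSκ : HasCondDistrib T (S ∘ f) κ μ := by
    refine ⟨by fun_prop, ?_⟩
    rw [show (fun x => ((⇑S ∘ f) x, T x)) = (fun x => (f x, id x)) ∘ T from
        funext fun x => by simp [hfT x], ← Measure.map_map (by fun_prop) hT, hμT, hSf]
    exact (compProd_map_condDistrib aemeasurable_id).symm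
  have hSκ' : HasCondDistrib T f (κ.comap S S.measurable) μ := by
    simpa [Function.comp_def] using hSκ.measurableEquiv_comp_right S.symm
  exact Kernel.ae_eq_of_compProd_eq ((hκ.comp_left hT).map_eq.symm.trans hSκ'.map_eq)

lemma relIndepSelfJoining_map_prodMap (hf : Measurable f) {T : X → X} (hT : Measurable T)
    (hμT : μ.map T = μ) (S : Y ≃ᵐ Y) (hfT : Function.Semiconj f T S) :
    (relIndepSelfJoining μ f).map (Prod.map T T) = relIndepSelfJoining μ f := by
  set κ := condDistrib id f μ
  calc (relIndepSelfJoining μ f).map (Prod.map T T)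
      = (κ.map T ×ₖ κ.map T) ∘ₘ μ.map f := by
        rw [relIndepSelfJoining, Measure.map_comp _ _ (hT.prodMap hT),
          Kernel.map_prod_map _ _ hT hT]
    _ = (κ.comap S S.measurable ×ₖ κ.comap S S.measurable) ∘ₘ μ.map f := by
        refine Measure.comp_congr ?_
        filter_upwards [condDistrib_map_ae_eq_comap μ hf hT hμT S hfT] with y hy
        rw [Kernel.prod_apply, Kernel.prod_apply, hy]
    _ = relIndepSelfJoining μ f := by
        rw [← Kernel.comap_prod, Measure.comap_comp_eq_comp_map,
          Measure.map_map_eq_of_semiconj hf hT S.measurable hμT hfT, relIndepSelfJoining]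

lemma ae_ae_condDistrib_id_mem_fiber [MeasurableEq Y] (hf : Measurable f) :
    ∀ᵐ y ∂μ.map f, ∀ᵐ x ∂condDistrib id f μ y, f x = y := by
  refine Measure.ae_ae_of_ae_compProd (p := fun p : Y × X => f p.2 = p.1) ?_
  rw [compProd_map_condDistrib aemeasurable_id]
  exact (ae_map_iff (by fun_prop) (measurableSet_eq_fun (hf.comp measurable_snd)
    measurable_fst)).2 (ae_of_all _ fun x => rfl)

lemma ae_relIndepSelfJoining_fiberwise [MeasurableEq Y] (hf : Measurable f) :
    ∀ᵐ p ∂relIndepSelfJoining μ f, f p.1 = f p.2 := by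
  refine Measure.ae_comp_of_ae_ae
    (measurableSet_eq_fun (hf.comp measurable_fst) (hf.comp measurable_snd)) ?_
  filter_upwards [ae_ae_condDistrib_id_mem_fiber μ hf] with y hy
  rw [Kernel.prod_apply]
  filter_upwards [Measure.quasiMeasurePreserving_fst.ae hy,
    Measure.quasiMeasurePreserving_snd.ae hy] with p h1 h2
  rw [h1, h2]

lemma ae_ae_condDistrib_apply_singleton_eq_one
    (hdiag : ∀ᵐ p ∂relIndepSelfJoining μ f, p.1 = p.2) :
    ∀ᵐ y ∂μ.map f, ∀ᵐ x ∂condDistrib id f μ y, condDistrib id f μ y {x} = 1 := by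
  filter_upwards [Measure.ae_ae_of_ae_comp hdiag] with y hy
  rw [Kernel.prod_apply] at hy
  exact Measure.ae_apply_singleton_eq_one_of_ae_prod_eq hy

theorem exists_injOn_of_ae_relIndepSelfJoining [MeasurableEq Y] (hf : Measurable f)
    (hdiag : ∀ᵐ p ∂relIndepSelfJoining μ f, p.1 = p.2) :
    ∃ B, MeasurableSet B ∧ μ B = 1 ∧ InjOn f B := by
  set κ := condDistrib id f μ
  have hB : MeasurableSet {x | κ (f x) {x} = 1} :=
    Kernel.measurable_apply_singleton_self (κ.comap f hf) (measurableSet_singleton 1)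
  refine ⟨_, hB, ?_, fun x₁ hx₁ x₂ hx₂ hfx => ?_⟩
  · have hμ : κ ∘ₘ μ.map f = μ := by
      rw [condDistrib_comp_map hf.aemeasurable aemeasurable_id, Measure.map_id]
    have hae : ∀ᵐ x ∂(κ ∘ₘ μ.map f), κ (f x) {x} = 1 := by
      refine Measure.ae_comp_of_ae_ae hB ?_
      filter_upwards [ae_ae_condDistrib_id_mem_fiber μ hf,
        ae_ae_condDistrib_apply_singleton_eq_one μ hdiag] with y hfy hy
      filter_upwards [hfy, hy] with x hx hxy
      rwa [hx]
    rw [hμ] at hae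
    exact (mem_ae_iff_prob_eq_one hB).1 hae
  · refine Measure.eq_of_apply_singleton_eq_one (μ := κ (f x₁)) hx₁ ?_
    rw [hfx]
    exact hx₂

theorem exists_injOn_of_forall_invariant_ae_eq [MeasurableEq Y] {ι : Type*} {T : ι → X → X}
    (hT : ∀ i, Measurable (T i)) (S : ι → Y ≃ᵐ Y) (hf : Measurable f)
    (hfT : ∀ i, Function.Semiconj f (T i) (S i))
    (hdiag : ∀ ρ : Measure (X × X), IsProbabilityMeasure ρ →
      (∀ i, ρ.map (Prod.map (T i) (T i)) = ρ) → (∀ᵐ p ∂ρ, f p.1 = f p.2) →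
      ∀ᵐ p ∂ρ, p.1 = p.2)
    (hμ : ∀ i, μ.map (T i) = μ) :
    ∃ B, MeasurableSet B ∧ μ B = 1 ∧ InjOn f B :=
  exists_injOn_of_ae_relIndepSelfJoining μ hf <|
    hdiag _ (isProbabilityMeasure_relIndepSelfJoining μ hf)
      (fun i => relIndepSelfJoining_map_prodMap μ hf (hT i) (hμ i) (S i) (hfT i))
      (ae_relIndepSelfJoining_fiberwise μ hf)

end RelativelyIndependentJoining

theorem stmt18_general {X Y Γ : Type*}
    [MetricSpace X] [CompactSpace X] [MeasurableSpace X] [BorelSpace X]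
    [MetricSpace Y] [CompactSpace Y] [MeasurableSpace Y] [BorelSpace Y]
    (T : Γ → X ≃ₜ X) (S : Γ → Y ≃ₜ Y)
    (f : X → Y) (hf : Continuous f)
    (hequiv : ∀ γ : Γ, ∀ x : X, f (T γ x) = S γ (f x)) :
    (∀ μ : ProbabilityMeasure X, μ ∈ invProb T →
      ∃ B : Set X, MeasurableSet B ∧ (μ : Measure X) B = 1 ∧ Set.InjOn f B) ↔
    (∀ lam : ProbabilityMeasure (X × X),
      (∀ γ : Γ, (lam : Measure (X × X)).map (fun p => (T γ p.1, T γ p.2)) =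
        (lam : Measure (X × X))) →
      (lam : Measure (X × X)) {p : X × X | f p.1 = f p.2} = 1 →
      (lam : Measure (X × X)) {p : X × X | p.1 = p.2} = 1) := by
  have hT : ∀ γ, Measurable (T γ) := fun γ => (T γ).continuous.measurable
  have hdiag : MeasurableSet {p : X × X | p.1 = p.2} := measurableSet_diagonal
  have hfib : MeasurableSet {p : X × X | f p.1 = f p.2} :=
    measurableSet_eq_fun (hf.measurable.comp measurable_fst) (hf.measurable.comp measurable_snd)
  constructor
  · intro hemb ρ hρT hρfib
    rw [← mem_ae_iff_prob_eq_one hfib] at hρfib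
    exact (mem_ae_iff_prob_eq_one hdiag).1 <|
      ae_eq_of_forall_invariant_exists_injOn hT (fun μ hμ => hemb ⟨μ, hμ⟩) ρ hρT hρfib
  · intro hjoin μ hμ
    have := nonempty_of_isProbabilityMeasure (μ : Measure X)
    refine exists_injOn_of_forall_invariant_ae_eq (μ : Measure X) hT
      (fun γ => (S γ).toMeasurableEquiv) hf.measurable hequiv (fun ρ hρ hρT hρfib => ?_) hμ
    exact (mem_ae_iff_prob_eq_one (μ := ρ) hdiag).2 <|
      hjoin ⟨ρ, hρ⟩ hρT ((mem_ae_iff_prob_eq_one (μ := ρ) hfib).1 hρfib)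

/-- Characterization of almost embeddings: a continuous equivariant map f : X → Y is an
almost embedding (i.e. for every invariant μ, f is injective on a Borel set of full
μ-measure, so that f induces a measure-theoretic isomorphism with respect to any
invariant measure) iff every (T×T)-invariant Borel probability measure on X × X giving
full mass to the fiber product {(x₁,x₂) : f(x₁) = f(x₂)} is supported on the diagonal. -/
theorem stmt18 {X Y Γ : Type*}
    [MetricSpace X] [CompactSpace X] [MeasurableSpace X] [BorelSpace X]
    [MetricSpace Y] [CompactSpace Y] [MeasurableSpace Y] [BorelSpace Y]
    [Group Γ] [Countable Γ] (T : Γ → X ≃ₜ X) (S : Γ → Y ≃ₜ Y)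
    (hT : ∀ γ γ' : Γ, ∀ x : X, T (γ * γ') x = T γ (T γ' x))
    (hS : ∀ γ γ' : Γ, ∀ y : Y, S (γ * γ') y = S γ (S γ' y))
    (f : X → Y) (hf : Continuous f)
    (hequiv : ∀ γ : Γ, ∀ x : X, f (T γ x) = S γ (f x)) :
    (∀ μ : ProbabilityMeasure X, μ ∈ invProb T →
      ∃ B : Set X, MeasurableSet B ∧ (μ : Measure X) B = 1 ∧ Set.InjOn f B) ↔
    (∀ lam : ProbabilityMeasure (X × X),
      (∀ γ : Γ, (lam : Measure (X × X)).map (fun p => (T γ p.1, T γ p.2)) =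
        (lam : Measure (X × X))) →
      (lam : Measure (X × X)) {p : X × X | f p.1 = f p.2} = 1 →
      (lam : Measure (X × X)) {p : X × X | p.1 = p.2} = 1) :=
  stmt18_general T S f hf hequiv
end
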